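/- arXiv:1701.00605 — 3 statements merged into one kernel-verified Lean document; each statement's English description precedes it below -/
import Mathlib

section
/- Let q be a prime power and J ⊆ Φ⁺ column closed. Then every right U_J-orbit on V̂_J contains exactly one template; hence the templates classify the right orbits of U_J acting on V̂_J. -/
set_option linter.unusedSectionVars false


open Matrix
open scoped Classical

noncomputable section

variable {F : Type} [Field F] [Fintype F] {n : ℕ}

/-- The pattern subgroup U_J ⊆ U_n(q): unitriangular matrices supported (off the diagonal)
on J. -/
def patternU (J : Set (Fin n × Fin n)) : Set (Matrix (Fin n) (Fin n) F) :=
  {u | (∀ i, u i i = 1) ∧ ∀ i j, i ≠ j → (i, j) ∉ J → u i j = 0}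

/-- V_J = {A ∈ M_n(q) : A_{ij} = 0 unless (i,j) ∈ J}. -/
def patternV (J : Set (Fin n × Fin n)) : Set (Matrix (Fin n) (Fin n) F) :=
  {A | ∀ i j, (i, j) ∉ J → A i j = 0}

/-- The natural projection π_J : M_n(q) → V_J. -/
def projJ (J : Set (Fin n × Fin n)) (B : Matrix (Fin n) (Fin n) F) :
    Matrix (Fin n) (Fin n) F :=
  Matrix.of fun i j => if (i, j) ∈ J then B i j else 0

/-- The pairing A*(B) = Σ_{i,j} A_{ij} B_{ij}; for A supported on J this is the linear
form A* = Σ_{(i,j)∈J} A_{ij} ε_{ij} evaluated at B. -/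
def dpair (A B : Matrix (Fin n) (Fin n) F) : F :=
  ∑ i, ∑ j, A i j * B i j

/-- The right orbit O_A^r = [A].U_J on the level of matrices: [A].u = [π_J(A u^{−t})]. -/
def orbR (J : Set (Fin n × Fin n)) (A : Matrix (Fin n) (Fin n) F) :
    Set (Matrix (Fin n) (Fin n) F) :=
  {B | ∃ u ∈ patternU J, B = projJ J (A * (u⁻¹)ᵀ)}

/-- The left orbit O_A^l = U_J.[A] on the level of matrices: u.[A] = [π_J(u^{−t} A)]. -/
def orbL (J : Set (Fin n × Fin n)) (A : Matrix (Fin n) (Fin n) F) :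
    Set (Matrix (Fin n) (Fin n) F) :=
  {B | ∃ u ∈ patternU J, B = projJ J ((u⁻¹)ᵀ * A)}

/-- The biorbit O_A^bi = U_J.[A].U_J on the level of matrices. -/
def orbBi (J : Set (Fin n × Fin n)) (A : Matrix (Fin n) (Fin n) F) :
    Set (Matrix (Fin n) (Fin n) F) :=
  {B | ∃ u ∈ patternU J, ∃ v ∈ patternU J, B = projJ J ((u⁻¹)ᵀ * projJ J (A * (v⁻¹)ᵀ))}

/-- The character of U_J afforded by the monomial right orbit module ℂO_A^r (with respect to
the nontrivial character θ of (𝔽_q,+)): the trace of g on the monomial basis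
{[B] : B ∈ O_A^r}, where [B]g = [B](g⁻¹ − E)·[B].g, so that the diagonal entry at [B] is
θ(B*(g⁻¹ − E)) if [B].g = [B] and 0 otherwise. -/
def rcharFn (J : Set (Fin n × Fin n)) (θ : AddChar F ℂ)
    (A g : Matrix (Fin n) (Fin n) F) : ℂ :=
  ∑ᶠ B ∈ orbR J A, if projJ J (B * (g⁻¹)ᵀ) = B then θ (dpair B (g⁻¹ - 1)) else 0

/-- The character of U_J afforded by the monomial left orbit module ℂO_A^l. -/
def lcharFn (J : Set (Fin n × Fin n)) (θ : AddChar F ℂ)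
    (A g : Matrix (Fin n) (Fin n) F) : ℂ :=
  ∑ᶠ B ∈ orbL J A, if projJ J ((g⁻¹)ᵀ * B) = B then θ (dpair B (g⁻¹ - 1)) else 0

/-- The character of U_J afforded by the biorbit span ℂO_A^bi regarded as a right
ℂU_J-module. -/
def bcharFn (J : Set (Fin n × Fin n)) (θ : AddChar F ℂ)
    (A g : Matrix (Fin n) (Fin n) F) : ℂ :=
  ∑ᶠ B ∈ orbBi J A, if projJ J (B * (g⁻¹)ᵀ) = B then θ (dpair B (g⁻¹ - 1)) else 0

/-- [A] is a (right) template: in each non-zero column of A, to the left of the highest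
non-zero entry all entries at positions in J vanish. -/
def isTemplate (J : Set (Fin n × Fin n)) (A : Matrix (Fin n) (Fin n) F) : Prop :=
  ∀ i j k : Fin n, A i j ≠ 0 → (∀ i', i' < i → A i' j = 0) → (i, k) ∈ J → k < j → A i k = 0

/-- The set main[A] of main conditions of a template [A]: the positions of the highest
non-zero entry in each non-zero column of A. -/
def mainSet (A : Matrix (Fin n) (Fin n) F) : Set (Fin n × Fin n) :=
  {x | A x.1 x.2 ≠ 0 ∧ ∀ i, i < x.1 → A i x.2 = 0}

/-- Main hook intersections of a set p of main conditions: positions (j,k) with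
(i,k), (j,l) ∈ p and i < j < k < l. -/
def hookInts (p : Set (Fin n × Fin n)) : Set (Fin n × Fin n) :=
  {x | x.1 < x.2 ∧ ∃ i l : Fin n, (i, x.2) ∈ p ∧ (x.1, l) ∈ p ∧ i < x.1 ∧ x.2 < l}

/-- Positions on the hook legs of the main conditions in p: (k,j) with (i,j) ∈ p, i < k < j. -/
def hookLegs (p : Set (Fin n × Fin n)) : Set (Fin n × Fin n) :=
  {x | ∃ i : Fin n, (i, x.2) ∈ p ∧ i < x.1 ∧ x.1 < x.2}

/-- Supplementary conditions: positions on main hook legs which are not main hook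
intersections. -/
def supplSet (p : Set (Fin n × Fin n)) : Set (Fin n × Fin n) :=
  hookLegs p \ hookInts p

/-- Normal supplementary conditions: supplementary conditions in J-normal rows (rows k with
k ∉ I, i.e. column k not contained in J). -/
def normalSuppl (I : Set (Fin n)) (p : Set (Fin n × Fin n)) : Set (Fin n × Fin n) :=
  {x ∈ supplSet p | x.1 ∉ I}

/-- Y-conditions: supplementary conditions which are not J-normal. -/
def ySet (I : Set (Fin n)) (p : Set (Fin n × Fin n)) : Set (Fin n × Fin n) :=
  {x ∈ supplSet p | x.1 ∈ I}

/-- The J-places Pl(p,J): the positions of J on the hook arms of the main conditions,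
i.e. (i,k) ∈ J with (i,j) ∈ p and i < k < j. -/
def plSet (J : Set (Fin n × Fin n)) (p : Set (Fin n × Fin n)) : Set (Fin n × Fin n) :=
  {x | x ∈ J ∧ ∃ j : Fin n, (x.1, j) ∈ p ∧ x.2 < j}

/-- The (right) projective stabilizer Pstab_{U_J}[A] = {u ∈ U_J : [A]u = λ_u[A] for some
λ_u ∈ ℂ*}, where [A]u = [A](u⁻¹−E)·[A].u is the monomial action, spelled out by evaluating
both sides at all B ∈ V_J. -/
def pstab (J : Set (Fin n × Fin n)) (θ : AddChar F ℂ) (A : Matrix (Fin n) (Fin n) F) :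
    Set (Matrix (Fin n) (Fin n) F) :=
  {u | u ∈ patternU J ∧ ∃ lam : ℂ, lam ≠ 0 ∧ ∀ B ∈ patternV J,
      θ (dpair A (u⁻¹ - 1)) * θ (dpair (projJ J (A * (u⁻¹)ᵀ)) B) = lam * θ (dpair A B)}

section Grp

variable {J : Set (Fin n × Fin n)} (hlt : ∀ p : Fin n × Fin n, p ∈ J → p.1 < p.2)

lemma one_mem_patternU : (1 : Matrix (Fin n) (Fin n) F) ∈ patternU J := by
  constructor
  · intro i; simp
  · intro i j hij _; simp [Matrix.one_apply, hij]

include hlt in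
lemma mul_mem_patternU {u v : Matrix (Fin n) (Fin n) F}
    (hu : u ∈ patternU J) (hv : v ∈ patternU J)
    (hcl : ∀ i j k : Fin n, (i,j) ∈ J → (j,k) ∈ J → (i,k) ∈ J) :
    u * v ∈ patternU J := by
  obtain ⟨hu1, hu0⟩ := hu
  obtain ⟨hv1, hv0⟩ := hv
  have key : ∀ i k : Fin n, u i k ≠ 0 → i = k ∨ (i,k) ∈ J := by
    intro i k h
    by_cases hik : i = k
    · exact Or.inl hik
    · exact Or.inr (by by_contra hn; exact h (hu0 i k hik hn))
  have keyv : ∀ i k : Fin n, v i k ≠ 0 → i = k ∨ (i,k) ∈ J := by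
    intro i k h
    by_cases hik : i = k
    · exact Or.inl hik
    · exact Or.inr (by by_contra hn; exact h (hv0 i k hik hn))
  constructor
  · intro i
    rw [Matrix.mul_apply]
    rw [Finset.sum_eq_single i]
    · rw [hu1, hv1]; ring
    · intro k _ hk
      rcases eq_or_ne (u i k) 0 with h | h
      · simp [h]
      rcases key i k h with heq | hJ1
      · exact absurd heq.symm hk
      rcases eq_or_ne (v k i) 0 with h2 | h2
      · simp [h2]
      rcases keyv k i h2 with heq2 | hJ2
      · exact absurd heq2 hk
      · exact absurd (lt_trans (hlt _ hJ1) (hlt _ hJ2)) (lt_irrefl i)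
    · intro h; exact absurd (Finset.mem_univ i) h
  · intro i j hij hnJ
    rw [Matrix.mul_apply]
    apply Finset.sum_eq_zero
    intro k _
    rcases eq_or_ne (u i k) 0 with h | h
    · simp [h]
    rcases eq_or_ne (v k j) 0 with h2 | h2
    · simp [h2]
    exfalso
    rcases key i k h with heq | hJ1
    · subst heq
      rcases keyv i j h2 with heq2 | hJ2
      · exact hij heq2
      · exact hnJ hJ2
    · rcases keyv k j h2 with heq2 | hJ2
      · subst heq2; exact hnJ hJ1
      · exact hnJ (hcl i k j hJ1 hJ2)

include hlt in
lemma patternU_upperTri {u : Matrix (Fin n) (Fin n) F} (hu : u ∈ patternU J) :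
    u.BlockTriangular id := by
  intro i j hij
  exact hu.2 i j (fun h => absurd h (by simpa using (ne_of_gt hij))) (fun h => absurd (hlt _ h) (by simpa using not_lt.mpr (le_of_lt hij)))

include hlt in
lemma patternU_isUnit_det {u : Matrix (Fin n) (Fin n) F} (hu : u ∈ patternU J) :
    IsUnit u.det := by
  rw [Matrix.det_of_upperTriangular (patternU_upperTri hlt hu)]
  simp [hu.1]

include hlt in
lemma pow_mem_patternU {u : Matrix (Fin n) (Fin n) F} (hu : u ∈ patternU J)
    (hcl : ∀ i j k : Fin n, (i,j) ∈ J → (j,k) ∈ J → (i,k) ∈ J) (m : ℕ) :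
    u ^ m ∈ patternU J := by
  induction m with
  | zero => simpa using one_mem_patternU
  | succ m ih => rw [pow_succ]; exact mul_mem_patternU hlt ih hu hcl

include hlt in
lemma inv_mem_patternU {u : Matrix (Fin n) (Fin n) F} (hu : u ∈ patternU J)
    (hcl : ∀ i j k : Fin n, (i,j) ∈ J → (j,k) ∈ J → (i,k) ∈ J) :
    u⁻¹ ∈ patternU J := by
  have hdet := patternU_isUnit_det hlt hu
  obtain ⟨a, b, hab, he⟩ : ∃ a b : ℕ, a < b ∧ u ^ a = u ^ b := by
    obtain ⟨a, b, hne, he⟩ := Finite.exists_ne_map_eq_of_infinite (fun m : ℕ => u ^ m)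
    rcases lt_or_gt_of_ne hne with h | h
    · exact ⟨a, b, h, he⟩
    · exact ⟨b, a, h, he.symm⟩
  have hone : u ^ (b - a) = 1 := by
    have hu2 : IsUnit (u ^ a).det := by
      rw [Matrix.det_pow]; exact hdet.pow a
    have : u ^ a * u ^ (b - a) = u ^ a * 1 := by
      rw [mul_one, ← pow_add]
      rw [Nat.add_sub_cancel' (le_of_lt hab)]
      exact he.symm
    have := congrArg (fun M => (u ^ a)⁻¹ * M) this
    simpa [← Matrix.mul_assoc, Matrix.nonsing_inv_mul _ hu2] using this
  have hba : 1 ≤ b - a := by omega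
  have : u * u ^ (b - a - 1) = 1 := by
    rw [← pow_succ']
    have he2 : b - a - 1 + 1 = b - a := by omega
    rw [he2]; exact hone
  rw [Matrix.inv_eq_right_inv this]
  exact pow_mem_patternU hlt hu hcl _

end Grp

section Act

variable {J : Set (Fin n × Fin n)}

lemma projJ_mem_patternV (B : Matrix (Fin n) (Fin n) F) : projJ J B ∈ patternV J := by
  intro i j h; simp [projJ, h]

lemma projJ_of_mem {A : Matrix (Fin n) (Fin n) F} (hA : A ∈ patternV J) : projJ J A = A := by
  ext i j
  by_cases h : (i, j) ∈ J
  · simp [projJ, h]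
  · simp [projJ, h, hA i j h]

lemma projJ_entry (B : Matrix (Fin n) (Fin n) F) (i j : Fin n) :
    projJ J B i j = if (i, j) ∈ J then B i j else 0 := rfl

lemma projJ_offJ_mul
    (hcl : ∀ i j k : Fin n, (i,j) ∈ J → (j,k) ∈ J → (i,k) ∈ J)
    {C v : Matrix (Fin n) (Fin n) F} (hC : ∀ i j, (i, j) ∈ J → C i j = 0)
    (hv : v ∈ patternU J) : projJ J (C * vᵀ) = 0 := by
  ext i j
  rw [projJ_entry]
  by_cases h : (i, j) ∈ J
  · simp only [h, if_true, Matrix.mul_apply, Matrix.transpose_apply, Matrix.zero_apply]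
    apply Finset.sum_eq_zero
    intro k _
    by_cases hkj : k = j
    · subst hkj; rw [hC i k h]; ring
    · by_cases hJk : (j, k) ∈ J
      · rw [hC i k (hcl i j k h hJk)]; ring
      · rw [hv.2 j k (Ne.symm hkj) hJk]; ring
  · simp [h]

lemma projJ_projJ_mul
    (hcl : ∀ i j k : Fin n, (i,j) ∈ J → (j,k) ∈ J → (i,k) ∈ J)
    (X : Matrix (Fin n) (Fin n) F) {v : Matrix (Fin n) (Fin n) F}
    (hv : v ∈ patternU J) :
    projJ J (projJ J X * vᵀ) = projJ J (X * vᵀ) := by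
  have hdecomp : X = projJ J X + (X - projJ J X) := by abel
  have hC : ∀ i j, (i, j) ∈ J → (X - projJ J X) i j = 0 := by
    intro i j h; simp [projJ_entry, h]
  have hadd : ∀ P Q : Matrix (Fin n) (Fin n) F,
      projJ J (P + Q) = projJ J P + projJ J Q := by
    intro P Q; ext i j
    by_cases h : (i, j) ∈ J <;> simp [projJ_entry, h]
  calc projJ J (projJ J X * vᵀ)
      = projJ J (projJ J X * vᵀ) + projJ J ((X - projJ J X) * vᵀ) := by
        rw [projJ_offJ_mul hcl hC hv, add_zero]
    _ = projJ J ((projJ J X + (X - projJ J X)) * vᵀ) := by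
        rw [Matrix.add_mul, hadd]
    _ = projJ J (X * vᵀ) := by rw [← hdecomp]

variable (hlt : ∀ p : Fin n × Fin n, p ∈ J → p.1 < p.2)
    (hcl : ∀ i j k : Fin n, (i,j) ∈ J → (j,k) ∈ J → (i,k) ∈ J)

include hlt hcl in
lemma mem_orbR_iff {A B : Matrix (Fin n) (Fin n) F} :
    B ∈ orbR J A ↔ ∃ v ∈ patternU J, B = projJ J (A * vᵀ) := by
  constructor
  · rintro ⟨u, hu, rfl⟩
    exact ⟨u⁻¹, inv_mem_patternU hlt hu hcl, rfl⟩
  · rintro ⟨v, hv, rfl⟩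
    refine ⟨v⁻¹, inv_mem_patternU hlt hv hcl, ?_⟩
    rw [Matrix.nonsing_inv_nonsing_inv _ (patternU_isUnit_det hlt hv)]

include hlt hcl in
lemma orbR_refl {A : Matrix (Fin n) (Fin n) F} (hA : A ∈ patternV J) : A ∈ orbR J A := by
  rw [mem_orbR_iff hlt hcl]
  exact ⟨1, one_mem_patternU, by rw [Matrix.transpose_one, Matrix.mul_one, projJ_of_mem hA]⟩

include hlt hcl in
lemma orbR_trans {A B C : Matrix (Fin n) (Fin n) F}
    (h1 : B ∈ orbR J A) (h2 : C ∈ orbR J B) : C ∈ orbR J A := by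
  rw [mem_orbR_iff hlt hcl] at h1 h2 ⊢
  obtain ⟨v, hv, rfl⟩ := h1
  obtain ⟨w, hw, rfl⟩ := h2
  refine ⟨w * v, mul_mem_patternU hlt hw hv hcl, ?_⟩
  rw [projJ_projJ_mul hcl _ hw, Matrix.mul_assoc, ← Matrix.transpose_mul]

include hlt hcl in
lemma orbR_symm {A B : Matrix (Fin n) (Fin n) F} (hA : A ∈ patternV J)
    (h : B ∈ orbR J A) : A ∈ orbR J B := by
  rw [mem_orbR_iff hlt hcl] at h ⊢
  obtain ⟨v, hv, rfl⟩ := h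
  refine ⟨v⁻¹, inv_mem_patternU hlt hv hcl, ?_⟩
  rw [projJ_projJ_mul hcl _ (inv_mem_patternU hlt hv hcl), Matrix.mul_assoc,
    ← Matrix.transpose_mul, Matrix.nonsing_inv_mul _ (patternU_isUnit_det hlt hv),
    Matrix.transpose_one, Matrix.mul_one, projJ_of_mem hA]

end Act

section Weight

variable {J : Set (Fin n × Fin n)}

def colW (B : Matrix (Fin n) (Fin n) F) (l : Fin n) : ℕ :=
  ∑ i : Fin n, if B i l = 0 then 0 else 2 ^ (n - 1 - i.val)

def wt (B : Matrix (Fin n) (Fin n) F) : ℕ := ∑ l : Fin n, colW B l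

lemma sum_two_pow (m : ℕ) : ∑ t ∈ Finset.range m, 2 ^ t = 2 ^ m - 1 := by
  induction m with
  | zero => simp
  | succ m ih =>
    rw [Finset.sum_range_succ, ih]
    have h1 : 1 ≤ 2 ^ m := Nat.one_le_two_pow
    have h2 : (2:ℕ) ^ (m+1) = 2 ^ m + 2 ^ m := by rw [pow_succ]; ring
    omega

lemma sum_split (i : Fin n) (f : Fin n → ℕ) :
    ∑ i', f i' = (∑ i' ∈ Finset.Iio i, f i') + f i + ∑ i' ∈ Finset.Ioi i, f i' := by
  have h1 : (Finset.univ : Finset (Fin n)) = (Finset.Iic i) ∪ (Finset.Ioi i) := by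
    ext x; simp [le_or_gt]
  have hd : Disjoint (Finset.Iic i) (Finset.Ioi i) := by
    rw [Finset.disjoint_left]
    intro x hx hx'
    simp only [Finset.mem_Iic] at hx
    simp only [Finset.mem_Ioi] at hx'
    exact absurd hx' (not_lt.mpr hx)
  rw [h1, Finset.sum_union hd, ← Finset.Iio_insert, Finset.sum_insert (by simp)]
  ring

lemma sum_Ioi_pow_lt (i : Fin n) :
    ∑ i' ∈ Finset.Ioi i, 2 ^ (n - 1 - i'.val) < 2 ^ (n - 1 - i.val) := by
  have hinj : ∀ x ∈ Finset.Ioi i, ∀ y ∈ Finset.Ioi i,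
      n - 1 - x.val = n - 1 - y.val → x = y := by
    intro x _ y _ h
    have hx := x.isLt; have hy := y.isLt
    exact Fin.ext (by omega)
  have h1 : ∑ i' ∈ Finset.Ioi i, 2 ^ (n - 1 - i'.val)
      = ∑ t ∈ (Finset.Ioi i).image (fun i' : Fin n => n - 1 - i'.val), 2 ^ t := by
    rw [Finset.sum_image hinj]
  have hsub : (Finset.Ioi i).image (fun i' : Fin n => n - 1 - i'.val)
      ⊆ Finset.range (n - 1 - i.val) := by
    intro t ht
    obtain ⟨x, hx, rfl⟩ := Finset.mem_image.mp ht
    rw [Finset.mem_Ioi] at hx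
    have hx2 := x.isLt
    have hxi : i.val < x.val := hx
    rw [Finset.mem_range]
    omega
  have h2 : ∑ t ∈ (Finset.Ioi i).image (fun i' : Fin n => n - 1 - i'.val), 2 ^ t
      ≤ ∑ t ∈ Finset.range (n - 1 - i.val), 2 ^ t :=
    Finset.sum_le_sum_of_subset hsub
  rw [h1]
  calc _ ≤ 2 ^ (n - 1 - i.val) - 1 := by rw [← sum_two_pow]; exact h2
    _ < 2 ^ (n - 1 - i.val) := by have := Nat.one_le_two_pow (n := n - 1 - i.val); omega

lemma colW_lt {B B' : Matrix (Fin n) (Fin n) F} {l i : Fin n}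
    (hlow : ∀ i', i' < i → B' i' l = B i' l) (h0 : B' i l = 0) (hne : B i l ≠ 0) :
    colW B' l < colW B l := by
  unfold colW
  rw [sum_split i (fun i' => if B' i' l = 0 then 0 else 2 ^ (n - 1 - i'.val)),
    sum_split i (fun i' => if B i' l = 0 then 0 else 2 ^ (n - 1 - i'.val))]
  have e1 : ∑ i' ∈ Finset.Iio i, (if B' i' l = 0 then 0 else 2 ^ (n - 1 - i'.val))
      = ∑ i' ∈ Finset.Iio i, (if B i' l = 0 then 0 else 2 ^ (n - 1 - i'.val)) := by
    apply Finset.sum_congr rfl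
    intro x hx
    rw [hlow x (Finset.mem_Iio.mp hx)]
  have e2 : (if B' i l = 0 then 0 else 2 ^ (n - 1 - i.val)) = 0 := by simp [h0]
  have e3 : (if B i l = 0 then 0 else 2 ^ (n - 1 - i.val)) = 2 ^ (n - 1 - i.val) := by
    simp [hne]
  have e4 : ∑ i' ∈ Finset.Ioi i, (if B' i' l = 0 then 0 else 2 ^ (n - 1 - i'.val))
      ≤ ∑ i' ∈ Finset.Ioi i, 2 ^ (n - 1 - i'.val) := by
    apply Finset.sum_le_sum
    intro x _
    split <;> simp
  have e5 := sum_Ioi_pow_lt i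
  have e6 : (0:ℕ) ≤ ∑ i' ∈ Finset.Ioi i, (if B i' l = 0 then 0 else 2 ^ (n - 1 - i'.val)) :=
    Nat.zero_le _
  omega

end Weight

section Main

variable {J : Set (Fin n × Fin n)}
    (hlt : ∀ p : Fin n × Fin n, p ∈ J → p.1 < p.2)
    (hcl : ∀ i j k : Fin n, (i,j) ∈ J → (j,k) ∈ J → (i,k) ∈ J)
    (hcc : ∀ i k j : Fin n, (i, j) ∈ J → k < j → (k, j) ∈ J)

include hlt hcl hcc in
lemma step_lemma {B : Matrix (Fin n) (Fin n) F} (hB : B ∈ patternV J)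
    (hnt : ¬ isTemplate J B) :
    ∃ B' ∈ orbR J B, wt B' < wt B := by
  rw [isTemplate] at hnt
  push_neg at hnt
  obtain ⟨i, j, k, hij, htop, hikJ, hkj, hik⟩ := hnt
  have hijJ : (i, j) ∈ J := by
    by_contra h; exact hij (hB i j h)
  have hkjJ : (k, j) ∈ J := hcc i k j hijJ hkj
  set c : F := -(B i k) * (B i j)⁻¹ with hc
  set v : Matrix (Fin n) (Fin n) F := 1 + Matrix.single k j c with hvdef
  have hventry : ∀ a b, v a b = (if a = b then 1 else 0) + (if k = a ∧ j = b then c else 0) := by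
    intro a b
    simp [hvdef, Matrix.add_apply, Matrix.single, Matrix.one_apply]
  have hv : v ∈ patternU J := by
    constructor
    · intro a
      rw [hventry]
      have : ¬ (k = a ∧ j = a) := by
        rintro ⟨rfl, rfl⟩; exact absurd hkj (lt_irrefl _)
      simp [this]
    · intro a b hab hnJ
      rw [hventry]
      have : ¬ (k = a ∧ j = b) := by
        rintro ⟨rfl, rfl⟩; exact hnJ hkjJ
      simp [hab, this]
  set B' : Matrix (Fin n) (Fin n) F := projJ J (B * vᵀ) with hB'def
  have htransE : (Matrix.single k j c)ᵀ = Matrix.single j k c := by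
    ext a b
    simp [Matrix.single, Matrix.transpose_apply, and_comm]
  have hBstd : ∀ a b, (B * Matrix.single j k c) a b
      = if b = k then B a j * c else 0 := by
    intro a b
    rw [Matrix.mul_apply]
    by_cases hbk : b = k
    · subst hbk
      rw [if_pos rfl, Finset.sum_eq_single j]
      · simp [Matrix.single]
      · intro m _ hm
        simp [Matrix.single, (show ¬ j = m from fun h => hm h.symm)]
      · intro h; exact absurd (Finset.mem_univ j) h
    · rw [if_neg hbk]
      apply Finset.sum_eq_zero
      intro m _
      simp [Matrix.single, (show ¬ k = b from fun h => hbk h.symm)]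
  have hBv : ∀ a b, (B * vᵀ) a b = B a b + (if b = k then B a j * c else 0) := by
    intro a b
    rw [hvdef, Matrix.transpose_add, Matrix.mul_add, Matrix.transpose_one, Matrix.mul_one,
      htransE, Matrix.add_apply, hBstd a b]
  have hcolB' : ∀ a b, b ≠ k → B' a b = B a b := by
    intro a b hbk
    rw [hB'def, projJ_entry]
    by_cases h : (a, b) ∈ J
    · simp [h, hBv, hbk]
    · simp [h, hB a b h]
  have hcolk : ∀ a, B' a k = if (a, k) ∈ J then B a k + B a j * c else 0 := by
    intro a
    rw [hB'def, projJ_entry]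
    simp [hBv]
  have hB'ik : B' i k = 0 := by
    rw [hcolk, if_pos hikJ, hc]
    field_simp
    ring
  have hB'low : ∀ a, a < i → B' a k = B a k := by
    intro a ha
    rw [hcolk, htop a ha]
    by_cases h : (a, k) ∈ J
    · simp [h]
    · simp [h, hB a k h]
  refine ⟨B', (mem_orbR_iff hlt hcl).mpr ⟨v, hv, hB'def⟩, ?_⟩
  unfold wt
  apply Finset.sum_lt_sum
  · intro l _
    by_cases hlk : l = k
    · subst hlk
      exact le_of_lt (colW_lt hB'low hB'ik hik)
    · apply le_of_eq
      unfold colW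
      exact Finset.sum_congr rfl (fun x _ => by rw [hcolB' x l hlk])
  · exact ⟨k, Finset.mem_univ k, colW_lt hB'low hB'ik hik⟩

include hlt hcl hcc in
lemma exists_template_mem {A : Matrix (Fin n) (Fin n) F} (hA : A ∈ patternV J) :
    ∃ B ∈ orbR J A, isTemplate J B := by
  set W : Set ℕ := {m | ∃ B ∈ orbR J A, wt B = m} with hW
  have hWne : W.Nonempty := ⟨wt A, A, orbR_refl hlt hcl hA, rfl⟩
  obtain ⟨B, hBorb, hBwt⟩ := Nat.sInf_mem hWne
  refine ⟨B, hBorb, ?_⟩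
  by_contra hnt
  have hBV : B ∈ patternV J := by
    obtain ⟨v, hv, rfl⟩ := (mem_orbR_iff hlt hcl).mp hBorb
    exact projJ_mem_patternV _
  obtain ⟨B', hB'orb, hB'wt⟩ := step_lemma hlt hcl hcc hBV hnt
  have hmem : wt B' ∈ W := ⟨B', orbR_trans hlt hcl hBorb hB'orb, rfl⟩
  have := Nat.sInf_le hmem
  omega



include hlt hcl hcc in
lemma template_uniq {B B' : Matrix (Fin n) (Fin n) F}
    (hB : B ∈ patternV J) (hB' : B' ∈ patternV J) (horb : B' ∈ orbR J B)
    (ht : isTemplate J B) (ht' : isTemplate J B') : B = B' := by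
  by_contra hne
  obtain ⟨v, hv, hB'eq⟩ := (mem_orbR_iff hlt hcl).mp horb
  -- entry relation
  have hrel : ∀ a b, (a, b) ∈ J →
      B' a b = B a b + ∑ m ∈ Finset.univ.filter (fun m => (b, m) ∈ J), B a m * v b m := by
    intro a b hab
    have h1 : B' a b = ∑ m, B a m * v b m := by
      rw [hB'eq, projJ_entry, if_pos hab, Matrix.mul_apply]
      simp [Matrix.transpose_apply]
    rw [h1, ← Finset.sum_filter_add_sum_filter_not Finset.univ (fun m => (b, m) ∈ J)]
    rw [add_comm]
    congr 1
    rw [Finset.sum_eq_single b]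
    · rw [hv.1 b, mul_one]
    · intro m hm hmb
      rw [hv.2 b m (fun h => hmb h.symm) (Finset.mem_filter.mp hm).2, mul_zero]
    · intro h
      exact absurd (Finset.mem_filter.mpr ⟨Finset.mem_univ b, fun hbb => absurd (hlt _ hbb) (lt_irrefl b)⟩) h
  -- the largest differing column
  have hexd : ∃ a l, B a l ≠ B' a l := by
    by_contra h
    push_neg at h
    exact hne (by ext a l; exact h a l)
  set Dcols := Finset.univ.filter (fun l : Fin n => ∃ a, B a l ≠ B' a l) with hD
  have hDne : Dcols.Nonempty := by
    obtain ⟨a, l, h⟩ := hexd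
    exact ⟨l, Finset.mem_filter.mpr ⟨Finset.mem_univ l, a, h⟩⟩
  set j := Dcols.max' hDne with hj
  obtain ⟨a0, ha0⟩ : ∃ a, B a j ≠ B' a j :=
    (Finset.mem_filter.mp (Dcols.max'_mem hDne)).2
  have hgt : ∀ l, j < l → ∀ a, B a l = B' a l := by
    intro l hl a
    by_contra h
    exact absurd (Dcols.le_max' l (Finset.mem_filter.mpr ⟨Finset.mem_univ l, a, h⟩))
      (not_le.mpr hl)
  have hja0J : (a0, j) ∈ J := by
    by_contra h
    exact ha0 (by rw [hB a0 j h, hB' a0 j h])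
  -- nonempty set of contributing pairs
  set T := Finset.univ.filter
      (fun p : Fin n × Fin n => p.1 < j ∧ (j, p.2) ∈ J ∧ v j p.2 * B p.1 p.2 ≠ 0) with hT
  have hTne : T.Nonempty := by
    by_contra h
    rw [Finset.not_nonempty_iff_eq_empty] at h
    apply ha0
    by_cases haj : (a0, j) ∈ J
    · rw [hrel a0 j haj]
      have : ∑ m ∈ Finset.univ.filter (fun m => (j, m) ∈ J), B a0 m * v j m = 0 := by
        apply Finset.sum_eq_zero
        intro m hm
        have hmJ := (Finset.mem_filter.mp hm).2
        have : (a0, m) ∉ T := by rw [h]; exact Finset.notMem_empty _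
        rw [hT, Finset.mem_filter] at this
        push_neg at this
        have h2 := this (Finset.mem_univ _) (hlt _ haj) hmJ
        rw [mul_comm]
        exact h2
      rw [this, add_zero]
    · rw [hB a0 j haj, hB' a0 j haj]
  -- the minimal row
  have hTfstne : (T.image Prod.fst).Nonempty := hTne.image _
  set istar := (T.image Prod.fst).min' hTfstne with histar
  have himin : ∀ p ∈ T, istar ≤ p.1 := fun p hp =>
    (T.image Prod.fst).min'_le p.1 (Finset.mem_image_of_mem _ hp)
  -- the maximal column among row istar
  set K := T.filter (fun p => p.1 = istar) with hK
  have hKne : K.Nonempty := by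
    obtain ⟨p, hp, hpe⟩ := Finset.mem_image.mp ((T.image Prod.fst).min'_mem hTfstne)
    exact ⟨p, Finset.mem_filter.mpr ⟨hp, hpe⟩⟩
  have hKsndne : (K.image Prod.snd).Nonempty := hKne.image _
  set kstar := (K.image Prod.snd).max' hKsndne with hkstar
  have hkmem : (istar, kstar) ∈ T := by
    obtain ⟨p, hp, hpe⟩ := Finset.mem_image.mp ((K.image Prod.snd).max'_mem hKsndne)
    obtain ⟨hpT, hp1⟩ := Finset.mem_filter.mp hp
    have hpe' : p.2 = kstar := hpe
    have hpp : p = (istar, kstar) := by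
      rw [← hp1, ← hpe']
    rwa [← hpp]
  have hkmax : ∀ m, (istar, m) ∈ T → m ≤ kstar := by
    intro m hm
    exact (K.image Prod.snd).le_max' m
      (Finset.mem_image.mpr ⟨(istar, m), Finset.mem_filter.mpr ⟨hm, rfl⟩, rfl⟩)
  obtain ⟨-, hij', hjkJ, hvBk⟩ := Finset.mem_filter.mp hkmem
  have hvk : v j kstar ≠ 0 := fun h => hvBk (by rw [h, zero_mul])
  have hBik : B istar kstar ≠ 0 := fun h => hvBk (by rw [h, mul_zero])
  have hmain : ∀ i', i' < istar → B i' kstar = 0 := by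
    intro i' hi'
    by_contra h
    have : (i', kstar) ∈ T := Finset.mem_filter.mpr
      ⟨Finset.mem_univ _, lt_trans hi' hij', hjkJ, fun hz => h (by
        rcases mul_eq_zero.mp hz with h1 | h1
        · exact absurd h1 hvk
        · exact h1)⟩
    exact absurd (himin _ this) (not_le.mpr hi')
  have hjk : j < kstar := hlt _ hjkJ
  have hijJ : (istar, j) ∈ J := hcc a0 istar j hja0J hij'
  -- templates give zero at (istar, j)
  have hBz : B istar j = 0 := ht istar kstar j hBik hmain hijJ hjk
  have hcolk : ∀ a, B a kstar = B' a kstar := hgt kstar hjk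
  have hB'z : B' istar j = 0 := by
    apply ht' istar kstar j
    · rw [← hcolk]; exact hBik
    · intro i' hi'; rw [← hcolk]; exact hmain i' hi'
    · exact hijJ
    · exact hjk
  -- but the relation gives a nonzero value
  have hsum : ∑ m ∈ Finset.univ.filter (fun m => (j, m) ∈ J), B istar m * v j m
      = B istar kstar * v j kstar := by
    apply Finset.sum_eq_single kstar
    · intro m hm hmk
      have hmJ := (Finset.mem_filter.mp hm).2
      by_contra hterm
      have hBim : B istar m ≠ 0 := fun h => hterm (by rw [h, zero_mul])
      have hvm : v j m ≠ 0 := fun h => hterm (by rw [h, mul_zero])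
      have hmT : (istar, m) ∈ T := Finset.mem_filter.mpr
        ⟨Finset.mem_univ _, hij', hmJ, fun hz => by
          rcases mul_eq_zero.mp hz with h1 | h1
          · exact hvm h1
          · exact hBim h1⟩
      have hmlt : m < kstar := lt_of_le_of_ne (hkmax m hmT) hmk
      have hmJ2 : (istar, m) ∈ J := by
        by_contra h
        exact hBim (hB _ _ h)
      exact hBim (ht istar kstar m hBik hmain hmJ2 hmlt)
    · intro h
      exact (h (Finset.mem_filter.mpr ⟨Finset.mem_univ _, hjkJ⟩)).elim
  have := hrel istar j hijJ
  rw [hBz, hB'z, hsum, zero_add] at this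
  exact hvBk (by rw [mul_comm]; exact this.symm)

end Main


/-- For J ⊆ Φ⁺ column closed (J = {(i,j) ∈ Φ⁺ : j ∈ I}), every right
U_J-orbit on V̂_J contains exactly one template; hence the templates classify the right
orbits of U_J on V̂_J. -/
theorem stmt_15 {F : Type} [Field F] [Fintype F] {n : ℕ}
    (I : Set (Fin n)) (J : Set (Fin n × Fin n))
    (hJ : J = {x : Fin n × Fin n | x.1 < x.2 ∧ x.2 ∈ I}) :
    ∀ A ∈ (patternV J : Set (Matrix (Fin n) (Fin n) F)),
      ∃! B : Matrix (Fin n) (Fin n) F, B ∈ orbR J A ∧ isTemplate J B := by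
  have hlt : ∀ p : Fin n × Fin n, p ∈ J → p.1 < p.2 := by
    subst hJ; rintro ⟨a, b⟩ hp; exact hp.1
  have hcl : ∀ i j k : Fin n, (i, j) ∈ J → (j, k) ∈ J → (i, k) ∈ J := by
    subst hJ; intro i j k h1 h2; exact ⟨lt_trans h1.1 h2.1, h2.2⟩
  have hcc : ∀ i k j : Fin n, (i, j) ∈ J → k < j → (k, j) ∈ J := by
    subst hJ; intro i k j h1 h2; exact ⟨h2, h1.2⟩
  intro A hA
  obtain ⟨B, hBorb, hBt⟩ := exists_template_mem hlt hcl hcc hA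
  have hBV : B ∈ patternV J := by
    obtain ⟨v, hv, rfl⟩ := (mem_orbR_iff hlt hcl).mp hBorb
    exact projJ_mem_patternV _
  refine ⟨B, ⟨hBorb, hBt⟩, ?_⟩
  rintro C ⟨hCorb, hCt⟩
  have hCV : C ∈ patternV J := by
    obtain ⟨v, hv, rfl⟩ := (mem_orbR_iff hlt hcl).mp hCorb
    exact projJ_mem_patternV _
  have hAC : A ∈ orbR J C := orbR_symm hlt hcl hA hCorb
  have hBC : B ∈ orbR J C := orbR_trans hlt hcl hAC hBorb
  exact template_uniq hlt hcl hcc hCV hBV hBC hCt hBt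
end
end

section
/- Let q be a prime power, J ⊆ Φ⁺ column closed, and [A] ∈ V̂_J a template with main condition set p = main[A]. Let R = R(p,J) ⊆ J consist of: (1) the main conditions and all positions of J above them (i.e. (i,j) with (k,j) ∈ p for some k ≥ i), (2) all positions of J in columns of A containing no main condition (zero columns), and (3) all positions of J in J-normal rows. Then R is a closed subset of Φ⁺, and the right projective stabilizer Pstab_{U_J}[A] = {u ∈ U_J : [A]u = λ_u [A] for some λ_u ∈ ℂ*} equals the pattern subgroup U_R; consequently ℂO_A^r = [A]ℂU_J is isomorphic to the induced module Ind_{U_R}^{U_J} ℂ[A]. -/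
open Matrix
open scoped Classical

noncomputable section

variable {F : Type} [Field F] [Fintype F] {n : ℕ}

section Lemmas
set_option linter.unusedSectionVars false
variable {F : Type} [Field F] [Fintype F] {n : ℕ}

lemma pow_supp {S : Set (Fin n × Fin n)}
    (hcl : ∀ i j k : Fin n, (i,j) ∈ S → (j,k) ∈ S → (i,k) ∈ S)
    {N : Matrix (Fin n) (Fin n) F} (hN : ∀ i j, (i,j) ∉ S → N i j = 0) :
    ∀ k, ∀ i j, (i,j) ∉ S → (N ^ (k+1)) i j = 0 := by
  intro k
  induction k with
  | zero => simpa using hN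
  | succ k ih =>
    intro i j hij
    rw [pow_succ, Matrix.mul_apply]
    apply Finset.sum_eq_zero
    intro l _
    by_cases h1 : (i,l) ∈ S
    · by_cases h2 : (l,j) ∈ S
      · exact absurd (hcl i l j h1 h2) hij
      · rw [hN l j h2, mul_zero]
    · rw [ih i l h1, zero_mul]

lemma pow_low {S : Set (Fin n × Fin n)} (hlt : ∀ x ∈ S, x.1 < x.2)
    {N : Matrix (Fin n) (Fin n) F} (hN : ∀ i j, (i,j) ∉ S → N i j = 0) :
    ∀ k, ∀ i j : Fin n, (N ^ k) i j ≠ 0 → i.val + k ≤ j.val := by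
  intro k
  induction k with
  | zero =>
    intro i j h
    rw [pow_zero] at h
    by_cases hij : i = j
    · subst hij; omega
    · rw [Matrix.one_apply_ne hij] at h; exact absurd rfl h
  | succ k ih =>
    intro i j h
    rw [pow_succ, Matrix.mul_apply] at h
    obtain ⟨l, -, hl⟩ := Finset.exists_ne_zero_of_sum_ne_zero h
    have h1 : (N ^ k) i l ≠ 0 := fun h0 => hl (by rw [h0, zero_mul])
    have h2 : N l j ≠ 0 := fun h0 => hl (by rw [h0, mul_zero])
    have h3 : (l, j) ∈ S := by by_contra h0; exact h2 (hN l j h0)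
    have := hlt _ h3
    have := ih i l h1
    simp only [Fin.lt_def] at *
    omega

lemma pow_n_zero {S : Set (Fin n × Fin n)} (hlt : ∀ x ∈ S, x.1 < x.2)
    {N : Matrix (Fin n) (Fin n) F} (hN : ∀ i j, (i,j) ∉ S → N i j = 0) :
    N ^ n = 0 := by
  ext i j
  by_contra h
  have := pow_low hlt hN n i j (by simpa using h)
  have := j.isLt
  omega

lemma patternU_one {S : Set (Fin n × Fin n)} :
    (1 : Matrix (Fin n) (Fin n) F) ∈ patternU S :=
  ⟨fun i => Matrix.one_apply_eq i, fun _ _ hij _ => Matrix.one_apply_ne hij⟩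

lemma patternU_mul {S : Set (Fin n × Fin n)} (hlt : ∀ x ∈ S, x.1 < x.2)
    (hcl : ∀ i j k : Fin n, (i,j) ∈ S → (j,k) ∈ S → (i,k) ∈ S)
    {u v : Matrix (Fin n) (Fin n) F} (hu : u ∈ patternU S) (hv : v ∈ patternU S) :
    u * v ∈ patternU S := by
  constructor
  · intro i
    rw [Matrix.mul_apply]
    rw [Finset.sum_eq_single i]
    · rw [hu.1 i, hv.1 i, one_mul]
    · intro k _ hk
      by_cases h1 : (i,k) ∈ S
      · have h2 : (k,i) ∉ S := fun h => by
          have := hlt _ h1; have := hlt _ h; simp only [Fin.lt_def] at *; omega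
        rw [hv.2 k i hk h2, mul_zero]
      · rw [hu.2 i k (Ne.symm hk) h1, zero_mul]
    · intro h; exact absurd (Finset.mem_univ i) h
  · intro i j hij hS
    rw [Matrix.mul_apply]
    apply Finset.sum_eq_zero
    intro k _
    by_cases hki : k = i
    · subst hki
      by_cases hkj : k = j
      · exact absurd hkj hij
      · rw [hv.2 k j hkj hS, mul_zero]
    · by_cases hkj : k = j
      · subst hkj; rw [hu.2 i k hij hS, zero_mul]
      · by_cases h1 : (i,k) ∈ S
        · by_cases h2 : (k,j) ∈ S
          · exact absurd (hcl i k j h1 h2) hS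
          · rw [hv.2 k j hkj h2, mul_zero]
        · rw [hu.2 i k (fun h => hki h.symm) h1, zero_mul]

lemma patternU_inv {S : Set (Fin n × Fin n)} (hlt : ∀ x ∈ S, x.1 < x.2)
    (hcl : ∀ i j k : Fin n, (i,j) ∈ S → (j,k) ∈ S → (i,k) ∈ S)
    {u : Matrix (Fin n) (Fin n) F} (hu : u ∈ patternU S) :
    u⁻¹ ∈ patternU S ∧ u * u⁻¹ = 1 ∧ u⁻¹ * u = 1 := by
  set N : Matrix (Fin n) (Fin n) F := u - 1 with hNdef
  have hN : ∀ i j, (i,j) ∉ S → N i j = 0 := by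
    intro i j hij
    by_cases h : i = j
    · subst h; simp [hNdef, Matrix.sub_apply, hu.1 i, Matrix.one_apply_eq]
    · simp [hNdef, Matrix.sub_apply, hu.2 i j h hij, Matrix.one_apply_ne h]
  have hN' : ∀ i j, (i,j) ∉ S → (-N) i j = 0 := by
    intro i j hij; simp [hN i j hij]
  have hpow0 : (-N) ^ n = 0 := pow_n_zero hlt hN'
  set v : Matrix (Fin n) (Fin n) F := ∑ k ∈ Finset.range n, (-N) ^ k with hvdef
  have hu1 : u = N + 1 := by simp [hNdef]
  have huv : u * v = 1 := by
    have h1 : (-N - 1) * v = -1 := by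
      rw [hvdef, mul_geom_sum, hpow0, zero_sub]
    have h2 : u = -(-N - 1) := by rw [hu1]; abel
    rw [h2, neg_mul, h1, neg_neg]
  have hvu : v * u = 1 := by
    have h1 : v * (-N - 1) = -1 := by
      rw [hvdef, geom_sum_mul, hpow0, zero_sub]
    have h2 : u = -(-N - 1) := by rw [hu1]; abel
    rw [h2, mul_neg, h1, neg_neg]
  have hvS : v ∈ patternU S := by
    constructor
    · intro i
      rw [hvdef, Matrix.sum_apply]
      rw [Finset.sum_eq_single 0]
      · simp
      · intro k _ hk
        have hk1 : k = (k - 1) + 1 := by omega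
        rw [hk1]
        exact pow_supp hcl hN' (k-1) i i (fun h => absurd (hlt _ h) (lt_irrefl i))
      · intro h
        exact absurd (Finset.mem_range.mpr (Fin.pos i)) h
    · intro i j hij hS
      rw [hvdef, Matrix.sum_apply]
      apply Finset.sum_eq_zero
      intro k _
      by_cases hk : k = 0
      · subst hk; simpa using Matrix.one_apply_ne hij
      · have hk1 : k = (k - 1) + 1 := by omega
        rw [hk1]
        exact pow_supp hcl hN' (k-1) i j hS
  have hinv : u⁻¹ = v := Matrix.inv_eq_right_inv huv
  exact ⟨hinv ▸ hvS, hinv ▸ huv, hinv ▸ hvu⟩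

end Lemmas

section Lemmas2
set_option linter.unusedSectionVars false
variable {F : Type} [Field F] [Fintype F] {n : ℕ}

lemma projJ_apply (J : Set (Fin n × Fin n)) (B : Matrix (Fin n) (Fin n) F) (i j : Fin n) :
    projJ J B i j = if (i,j) ∈ J then B i j else 0 := rfl

lemma projJ_mem (J : Set (Fin n × Fin n)) (B : Matrix (Fin n) (Fin n) F) :
    projJ J B ∈ patternV J := by
  intro i j hij; simp [projJ_apply, hij]

lemma projJ_eq_self {J : Set (Fin n × Fin n)} {A : Matrix (Fin n) (Fin n) F}
    (hA : A ∈ patternV J) : projJ J A = A := by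
  ext i j
  rw [projJ_apply]
  by_cases h : (i,j) ∈ J
  · simp [h]
  · simp [h, hA i j h]

lemma dpair_projJ_left {J : Set (Fin n × Fin n)} (M : Matrix (Fin n) (Fin n) F)
    {C : Matrix (Fin n) (Fin n) F} (hC : C ∈ patternV J) :
    dpair (projJ J M) C = dpair M C := by
  unfold dpair
  apply Finset.sum_congr rfl
  intro i _
  apply Finset.sum_congr rfl
  intro j _
  by_cases h : (i,j) ∈ J
  · rw [projJ_apply, if_pos h]
  · rw [hC i j h, mul_zero, mul_zero]

lemma dpair_eq_trace (A B : Matrix (Fin n) (Fin n) F) :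
    dpair A B = (Aᵀ * B).trace := by
  unfold dpair
  rw [Matrix.trace, Finset.sum_comm]
  apply Finset.sum_congr rfl
  intro i _
  rw [Matrix.diag_apply, Matrix.mul_apply]
  apply Finset.sum_congr rfl
  intro j _
  rw [Matrix.transpose_apply]

lemma inv_sub_one_mem {J : Set (Fin n × Fin n)} (hlt : ∀ x ∈ J, x.1 < x.2)
    (hcl : ∀ i j k : Fin n, (i,j) ∈ J → (j,k) ∈ J → (i,k) ∈ J)
    {u : Matrix (Fin n) (Fin n) F} (hu : u ∈ patternU J) :
    (u⁻¹ - 1) ∈ patternV J := by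
  have hui := (patternU_inv hlt hcl hu).1
  intro i j hij
  by_cases h : i = j
  · subst h; simp [Matrix.sub_apply, hui.1 i, Matrix.one_apply_eq]
  · simp [Matrix.sub_apply, hui.2 i j h hij, Matrix.one_apply_ne h]

/-- The right action on matrix level. -/
def actR (J : Set (Fin n × Fin n)) (A u : Matrix (Fin n) (Fin n) F) :
    Matrix (Fin n) (Fin n) F := projJ J (A * (u⁻¹)ᵀ)

lemma cocycle {J : Set (Fin n × Fin n)} (hlt : ∀ x ∈ J, x.1 < x.2)
    (hcl : ∀ i j k : Fin n, (i,j) ∈ J → (j,k) ∈ J → (i,k) ∈ J)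
    {u v : Matrix (Fin n) (Fin n) F} (hu : u ∈ patternU J) (hv : v ∈ patternU J)
    (A : Matrix (Fin n) (Fin n) F) :
    dpair A ((u*v)⁻¹ - 1) = dpair A (u⁻¹ - 1) + dpair (actR J A u) (v⁻¹ - 1) := by
  have h2 : dpair (actR J A u) (v⁻¹ - 1) = dpair (A * (u⁻¹)ᵀ) (v⁻¹ - 1) :=
    dpair_projJ_left _ (inv_sub_one_mem hlt hcl hv)
  rw [h2, dpair_eq_trace, dpair_eq_trace, dpair_eq_trace]
  rw [Matrix.mul_inv_rev]
  have e0 : (A * (u⁻¹)ᵀ)ᵀ = u⁻¹ * Aᵀ := by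
    rw [Matrix.transpose_mul, Matrix.transpose_transpose]
  rw [e0]
  have e2 : (v⁻¹ * u⁻¹ - 1 : Matrix (Fin n) (Fin n) F)
      = (u⁻¹ - 1) + ((v⁻¹ - 1) * u⁻¹) := by noncomm_ring
  rw [e2, Matrix.mul_add, Matrix.trace_add]
  congr 1
  rw [← mul_assoc, Matrix.trace_mul_comm, mul_assoc]

lemma projJ_mul_right {I : Set (Fin n)} {J : Set (Fin n × Fin n)}
    (hJ : J = {x : Fin n × Fin n | x.1 < x.2 ∧ x.2 ∈ I})
    (M : Matrix (Fin n) (Fin n) F) {w : Matrix (Fin n) (Fin n) F} (hw : w ∈ patternU J) :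
    projJ J ((projJ J M) * wᵀ) = projJ J (M * wᵀ) := by
  ext i j
  rw [projJ_apply, projJ_apply]
  by_cases hij : (i,j) ∈ J
  · rw [if_pos hij, if_pos hij, Matrix.mul_apply, Matrix.mul_apply]
    apply Finset.sum_congr rfl
    intro k _
    rw [Matrix.transpose_apply]
    by_cases hik : (i,k) ∈ J
    · rw [projJ_apply, if_pos hik]
    · have hkj : k ≠ j := by rintro rfl; exact hik hij
      have hjk : (j,k) ∉ J := by
        intro h
        rw [hJ] at hij h hik
        exact hik ⟨lt_trans hij.1 h.1, h.2⟩
      rw [hw.2 j k (fun h => hkj h.symm) hjk, mul_zero, mul_zero]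
  · rw [if_neg hij, if_neg hij]

end Lemmas2

section Lemmas3
set_option linter.unusedSectionVars false
variable {F : Type} [Field F] [Fintype F] {n : ℕ}

lemma exists_min_row {A : Matrix (Fin n) (Fin n) F} {k : Fin n} (h : ∃ i, A i k ≠ 0) :
    ∃ i0, A i0 k ≠ 0 ∧ ∀ i, i < i0 → A i k = 0 := by
  classical
  set s := Finset.univ.filter (fun i => A i k ≠ 0) with hs
  have hne : s.Nonempty := by
    obtain ⟨i, hi⟩ := h
    exact ⟨i, by simp [hs, hi]⟩
  refine ⟨s.min' hne, ?_, ?_⟩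
  · have := s.min'_mem hne; simp [hs] at this; exact this
  · intro i hi
    by_contra h0
    have : i ∈ s := by simp [hs, h0]
    exact absurd (s.min'_le i this) (not_le.mpr hi)

lemma R_closed {I : Set (Fin n)} {J R : Set (Fin n × Fin n)}
    (hJ : J = {x : Fin n × Fin n | x.1 < x.2 ∧ x.2 ∈ I})
    {A : Matrix (Fin n) (Fin n) F}
    (hR : R = {x : Fin n × Fin n | x ∈ J ∧
        ((∃ k : Fin n, (k, x.2) ∈ mainSet A ∧ x.1 ≤ k) ∨
         (∀ k : Fin n, A k x.2 = 0) ∨ x.1 ∉ I)}) :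
    ∀ i j k : Fin n, (i, j) ∈ R → (j, k) ∈ R → (i, k) ∈ R := by
  intro i j k hij hjk
  rw [hR] at hij hjk ⊢
  obtain ⟨hijJ, hc1⟩ := hij
  obtain ⟨hjkJ, hc2⟩ := hjk
  rw [hJ] at hijJ hjkJ
  refine ⟨by rw [hJ]; exact ⟨lt_trans hijJ.1 hjkJ.1, hjkJ.2⟩, ?_⟩
  rcases hc2 with ⟨m, hm, hjm⟩ | hz | hnI
  · exact Or.inl ⟨m, hm, le_trans (le_of_lt hijJ.1) hjm⟩
  · exact Or.inr (Or.inl hz)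
  · exact absurd hijJ.2 hnI

lemma stab_aux {I : Set (Fin n)} {J R : Set (Fin n × Fin n)}
    (hJ : J = {x : Fin n × Fin n | x.1 < x.2 ∧ x.2 ∈ I})
    {A : Matrix (Fin n) (Fin n) F} (hA : A ∈ patternV J) (htemp : isTemplate J A)
    (hR : R = {x : Fin n × Fin n | x ∈ J ∧
        ((∃ k : Fin n, (k, x.2) ∈ mainSet A ∧ x.1 ≤ k) ∨
         (∀ k : Fin n, A k x.2 = 0) ∨ x.1 ∉ I)})
    {v : Matrix (Fin n) (Fin n) F} (hv : v ∈ patternU J) :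
    projJ J (A * vᵀ) = A ↔ v ∈ patternU R := by
  constructor
  · intro h
    have hcond : ∀ i j, (i,j) ∈ J → ∑ k, A i k * v j k = A i j := by
      intro i j hij
      have h2 := congrFun (congrFun h i) j
      rw [projJ_apply, if_pos hij, Matrix.mul_apply] at h2
      simpa [Matrix.transpose_apply] using h2
    have key : ∀ (m : ℕ) (j k : Fin n), n - k.val ≤ m → (j,k) ∈ J → (j,k) ∉ R → v j k = 0 := by
      intro m
      induction m with
      | zero => intro j k hm _ _; exact absurd hm (by have := k.isLt; omega)
      | succ m ih =>
        intro j k hm hjkJ hjkR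
        have hjltk : j < k := by rw [hJ] at hjkJ; exact hjkJ.1
        have hnot : ¬((∃ m', (m', k) ∈ mainSet A ∧ j ≤ m') ∨
            (∀ i', A i' k = 0) ∨ j ∉ I) := by
          intro hc
          exact hjkR (by rw [hR]; exact ⟨hjkJ, hc⟩)
        push_neg at hnot
        obtain ⟨hno_main, hcol, hjI2⟩ := hnot
        obtain ⟨i0, hi0ne, hi0min⟩ := exists_min_row hcol
        have hmain : (i0, k) ∈ mainSet A := ⟨hi0ne, hi0min⟩
        have hi0j : i0 < j := hno_main i0 hmain
        have hi0jJ : (i0, j) ∈ J := by rw [hJ]; exact ⟨hi0j, hjI2⟩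
        have hsum := hcond i0 j hi0jJ
        have hsum2 : ∑ k', A i0 k' * v j k' = A i0 j * v j j + A i0 k * v j k := by
          have hp := Finset.sum_pair (f := fun x => A i0 x * v j x)
            (show j ≠ k from ne_of_lt hjltk)
          rw [← hp]
          refine (Finset.sum_subset (Finset.subset_univ _) ?_).symm
          intro k' _ hk'
          simp only [Finset.mem_insert, Finset.mem_singleton] at hk'
          push_neg at hk'
          obtain ⟨hk'j, hk'k⟩ := hk'
          by_cases hv0 : v j k' = 0
          · rw [hv0, mul_zero]
          · have hjk'J : (j,k') ∈ J := by
              by_contra h0; exact hv0 (hv.2 j k' (fun hh => hk'j hh.symm) h0)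
            have hjk' : j < k' := by rw [hJ] at hjk'J; exact hjk'J.1
            rcases lt_trichotomy k' k with hlt' | heq | hgt
            · have hik'J : (i0, k') ∈ J := by
                rw [hJ] at hjk'J ⊢; exact ⟨lt_trans hi0j hjk', hjk'J.2⟩
              rw [htemp i0 k k' hi0ne hi0min hik'J hlt', zero_mul]
            · exact absurd heq hk'k
            · by_cases hRk' : (j,k') ∈ R
              · rw [hR] at hRk'
                rcases hRk'.2 with ⟨m', hm', hjm'⟩ | hzero | hnI
                · rw [hm'.2 i0 (lt_of_lt_of_le hi0j hjm'), zero_mul]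
                · rw [hzero i0, zero_mul]
                · exact absurd hjI2 hnI
              · rw [ih j k' (by
                    have hk := k.isLt
                    simp only [Fin.lt_def] at hgt
                    omega) hjk'J hRk', mul_zero]
        rw [hsum2, hv.1 j, mul_one] at hsum
        have h0 : A i0 k * v j k = 0 := by linear_combination hsum
        exact (mul_eq_zero.mp h0).resolve_left hi0ne
    refine ⟨hv.1, ?_⟩
    intro i j hij hijR
    by_cases hijJ : (i,j) ∈ J
    · exact key n i j (Nat.sub_le n j.val) hijJ hijR
    · exact hv.2 i j hij hijJ
  · intro hvR
    ext i j
    rw [projJ_apply]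
    by_cases hij : (i,j) ∈ J
    · rw [if_pos hij, Matrix.mul_apply]
      have hiltj : i < j := by rw [hJ] at hij; exact hij.1
      have hjI : j ∈ I := by rw [hJ] at hij; exact hij.2
      rw [Finset.sum_eq_single j]
      · rw [Matrix.transpose_apply, hvR.1 j, mul_one]
      · intro k _ hkj
        rw [Matrix.transpose_apply]
        by_cases hv0 : v j k = 0
        · rw [hv0, mul_zero]
        · have hjkR : (j,k) ∈ R := by
            by_contra h0; exact hv0 (hvR.2 j k (fun hh => hkj hh.symm) h0)
          rw [hR] at hjkR
          rcases hjkR.2 with ⟨m', hm', hjm'⟩ | hzero | hnI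
          · rw [hm'.2 i (lt_of_lt_of_le hiltj hjm'), zero_mul]
          · rw [hzero i, zero_mul]
          · exact absurd hjI hnI
      · intro hj; exact absurd (Finset.mem_univ j) hj
    · rw [if_neg hij, hA i j hij]

end Lemmas3

section Lemmas4
set_option linter.unusedSectionVars false
variable {F : Type} [Field F] [Fintype F] {n : ℕ}

lemma theta_ne_zero (θ : AddChar F ℂ) (a : F) : θ a ≠ 0 := by
  intro h
  have h1 : θ a * θ (-a) = 1 := by
    rw [← AddChar.map_add_eq_mul, add_neg_cancel, AddChar.map_zero_eq_one]
  rw [h, zero_mul] at h1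
  exact zero_ne_one h1

lemma theta_coeff_zero {θ : AddChar F ℂ} (hθ : θ ≠ 1) {c : F}
    (h : ∀ t, θ (c * t) = 1) : c = 0 := by
  by_contra hc
  apply hθ
  apply DFunLike.ext
  intro x
  have := h (c⁻¹ * x)
  rw [← mul_assoc, mul_inv_cancel₀ hc, one_mul] at this
  rw [this, AddChar.one_apply]

lemma dpair_single (X : Matrix (Fin n) (Fin n) F) (i j : Fin n) (t : F) :
    dpair X (Matrix.of fun i' j' => if (i',j') = (i,j) then t else 0) = X i j * t := by
  unfold dpair
  simp only [Matrix.of_apply, Prod.mk.injEq]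
  rw [Finset.sum_eq_single i]
  · rw [Finset.sum_eq_single j]
    · simp
    · intro b _ hb; simp [hb]
    · intro hj; exact absurd (Finset.mem_univ j) hj
  · intro b _ hb; apply Finset.sum_eq_zero; intro j' _; simp [hb]
  · intro hi; exact absurd (Finset.mem_univ i) hi

lemma dpair_zero_right (X : Matrix (Fin n) (Fin n) F) : dpair X 0 = 0 := by
  unfold dpair; simp

lemma patternU_mono {R J : Set (Fin n × Fin n)} (hRJ : R ⊆ J)
    {u : Matrix (Fin n) (Fin n) F} (hu : u ∈ patternU R) : u ∈ patternU J :=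
  ⟨hu.1, fun i j hij hJ' => hu.2 i j hij (fun hR' => hJ' (hRJ hR'))⟩

lemma stab_iff {I : Set (Fin n)} {J R : Set (Fin n × Fin n)}
    (hJ : J = {x : Fin n × Fin n | x.1 < x.2 ∧ x.2 ∈ I})
    {A : Matrix (Fin n) (Fin n) F} (hA : A ∈ patternV J) (htemp : isTemplate J A)
    (hR : R = {x : Fin n × Fin n | x ∈ J ∧
        ((∃ k : Fin n, (k, x.2) ∈ mainSet A ∧ x.1 ≤ k) ∨
         (∀ k : Fin n, A k x.2 = 0) ∨ x.1 ∉ I)})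
    {u : Matrix (Fin n) (Fin n) F} (hu : u ∈ patternU J) :
    actR J A u = A ↔ u ∈ patternU R := by
  have hltJ : ∀ x ∈ J, x.1 < x.2 := by rw [hJ]; exact fun x hx => hx.1
  have hclJ : ∀ i j k : Fin n, (i,j) ∈ J → (j,k) ∈ J → (i,k) ∈ J := by
    intro i j k h1 h2; rw [hJ] at *; exact ⟨lt_trans h1.1 h2.1, h2.2⟩
  have hRJ : R ⊆ J := by rw [hR]; rintro x ⟨hx, -⟩; exact hx
  have hltR : ∀ x ∈ R, x.1 < x.2 := fun x hx => hltJ x (hRJ hx)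
  have hclR := R_closed hJ hR
  have hui := patternU_inv hltJ hclJ hu
  have main := stab_aux hJ hA htemp hR hui.1
  unfold actR
  rw [main]
  constructor
  · intro h
    have h2 := (patternU_inv hltR hclR h).1
    rwa [Matrix.inv_eq_right_inv hui.2.2] at h2
  · intro h
    exact (patternU_inv hltR hclR h).1

lemma pstab_eq {I : Set (Fin n)} {J R : Set (Fin n × Fin n)}
    (hJ : J = {x : Fin n × Fin n | x.1 < x.2 ∧ x.2 ∈ I})
    (θ : AddChar F ℂ) (hθ : θ ≠ 1)
    {A : Matrix (Fin n) (Fin n) F} (hA : A ∈ patternV J) (htemp : isTemplate J A)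
    (hR : R = {x : Fin n × Fin n | x ∈ J ∧
        ((∃ k : Fin n, (k, x.2) ∈ mainSet A ∧ x.1 ≤ k) ∨
         (∀ k : Fin n, A k x.2 = 0) ∨ x.1 ∉ I)}) :
    pstab J θ A = (patternU R : Set (Matrix (Fin n) (Fin n) F)) := by
  have hRJ : R ⊆ J := by rw [hR]; rintro x ⟨hx, -⟩; exact hx
  ext u
  constructor
  · rintro ⟨huJ, lam, hlam, hall⟩
    set C := projJ J (A * (u⁻¹)ᵀ) with hC
    have hzero : (0 : Matrix (Fin n) (Fin n) F) ∈ patternV J := fun i j _ => rfl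
    have h0 := hall 0 hzero
    rw [dpair_zero_right, dpair_zero_right, AddChar.map_zero_eq_one, mul_one, mul_one] at h0
    have hkey : ∀ B ∈ patternV J, θ (dpair C B) = θ (dpair A B) := by
      intro B hB
      have h1 := hall B hB
      rw [← h0] at h1
      exact mul_left_cancel₀ (theta_ne_zero θ _) h1
    have hCA : C = A := by
      ext i j
      by_cases hij : (i,j) ∈ J
      · have hT : ∀ t : F, θ ((C i j - A i j) * t) = 1 := by
          intro t
          have hBmem : (Matrix.of fun i' j' => if (i',j') = (i,j) then t else 0)
              ∈ patternV J := by
            intro i' j' h'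
            simp only [Matrix.of_apply]
            rw [if_neg]
            intro he
            rw [he] at h'
            exact h' hij
          have h1 := hkey _ hBmem
          rw [dpair_single, dpair_single] at h1
          have h2 : θ (A i j * t) * θ ((C i j - A i j) * t) = θ (A i j * t) * 1 := by
            rw [mul_one, ← AddChar.map_add_eq_mul,
              show A i j * t + (C i j - A i j) * t = C i j * t by ring]
            exact h1
          exact mul_left_cancel₀ (theta_ne_zero θ _) h2
        have := theta_coeff_zero hθ hT
        exact sub_eq_zero.mp this
      · rw [hA i j hij]
        exact (projJ_mem J _) i j hij
    exact (stab_iff hJ hA htemp hR huJ).mp hCA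
  · intro huR
    have huJ : u ∈ patternU J := patternU_mono hRJ huR
    refine ⟨huJ, θ (dpair A (u⁻¹ - 1)), theta_ne_zero θ _, ?_⟩
    intro B hB
    rw [show projJ J (A * (u⁻¹)ᵀ) = A from (stab_iff hJ hA htemp hR huJ).mpr huR]

end Lemmas4

section Lemmas5
set_option linter.unusedSectionVars false
variable {F : Type} [Field F] [Fintype F] {n : ℕ}

lemma actR_one {J : Set (Fin n × Fin n)} {A : Matrix (Fin n) (Fin n) F}
    (hA : A ∈ patternV J) : actR J A 1 = A := by
  unfold actR
  rw [inv_one, Matrix.transpose_one, mul_one, projJ_eq_self hA]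

lemma actR_mul {I : Set (Fin n)} {J : Set (Fin n × Fin n)}
    (hJ : J = {x : Fin n × Fin n | x.1 < x.2 ∧ x.2 ∈ I})
    (M : Matrix (Fin n) (Fin n) F) {u v : Matrix (Fin n) (Fin n) F}
    (hu : u ∈ patternU J) (hv : v ∈ patternU J) :
    actR J (actR J M u) v = actR J M (u * v) := by
  have hltJ : ∀ x ∈ J, x.1 < x.2 := by rw [hJ]; exact fun x hx => hx.1
  have hclJ : ∀ i j k : Fin n, (i,j) ∈ J → (j,k) ∈ J → (i,k) ∈ J := by
    intro i j k h1 h2; rw [hJ] at *; exact ⟨lt_trans h1.1 h2.1, h2.2⟩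
  have hvi := (patternU_inv hltJ hclJ hv).1
  unfold actR
  rw [projJ_mul_right hJ _ hvi]
  congr 1
  rw [mul_assoc, ← Matrix.transpose_mul, ← Matrix.mul_inv_rev]

end Lemmas5

theorem stmt_16aux {F : Type} [Field F] [Fintype F] {n : ℕ}
    (I : Set (Fin n)) (J : Set (Fin n × Fin n))
    (hJ : J = {x : Fin n × Fin n | x.1 < x.2 ∧ x.2 ∈ I})
    (θ : AddChar F ℂ) (hθ : θ ≠ 1)
    (A : Matrix (Fin n) (Fin n) F) (hA : A ∈ patternV J) (htemp : isTemplate J A)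
    (R : Set (Fin n × Fin n))
    (hR : R = {x : Fin n × Fin n | x ∈ J ∧
        ((∃ k : Fin n, (k, x.2) ∈ mainSet A ∧ x.1 ≤ k) ∨
         (∀ k : Fin n, A k x.2 = 0) ∨ x.1 ∉ I)}) :
    (∀ i j k : Fin n, (i, j) ∈ R → (j, k) ∈ R → (i, k) ∈ R) ∧
    pstab J θ A = (patternU R : Set (Matrix (Fin n) (Fin n) F)) ∧
    (∀ g ∈ patternU J,
        (Nat.card ↥(patternU R : Set (Matrix (Fin n) (Fin n) F)) : ℂ) * rcharFn J θ A g =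
          ∑ᶠ x ∈ (patternU J : Set (Matrix (Fin n) (Fin n) F)),
            (if x * g * x⁻¹ ∈ patternU R then θ (dpair A ((x * g * x⁻¹)⁻¹ - 1)) else 0)) := by
  have hltJ : ∀ x ∈ J, x.1 < x.2 := by rw [hJ]; exact fun x hx => hx.1
  have hclJ : ∀ i j k : Fin n, (i,j) ∈ J → (j,k) ∈ J → (i,k) ∈ J := by
    intro i j k h1 h2; rw [hJ] at *; exact ⟨lt_trans h1.1 h2.1, h2.2⟩
  refine ⟨R_closed hJ hR, pstab_eq hJ θ hθ hA htemp hR, ?_⟩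
  intro g hg
  set sJ : Finset (Matrix (Fin n) (Fin n) F) := (patternU J : Set (Matrix (Fin n) (Fin n) F)).toFinite.toFinset with hsJ
  set sR : Finset (Matrix (Fin n) (Fin n) F) := (patternU R : Set (Matrix (Fin n) (Fin n) F)).toFinite.toFinset with hsR
  set orbFin : Finset (Matrix (Fin n) (Fin n) F) := (orbR J A).toFinite.toFinset with horbFin
  set φ : Matrix (Fin n) (Fin n) F → Matrix (Fin n) (Fin n) F := fun x => actR J A x with hφ
  set G : Matrix (Fin n) (Fin n) F → ℂ := fun x =>
    if x * g * x⁻¹ ∈ patternU R then θ (dpair A ((x * g * x⁻¹)⁻¹ - 1)) else 0 with hG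
  set F' : Matrix (Fin n) (Fin n) F → ℂ := fun B =>
    if projJ J (B * (g⁻¹)ᵀ) = B then θ (dpair B (g⁻¹ - 1)) else 0 with hF'
  -- rewrite both finsums as finite sums
  have hrchar : rcharFn J θ A g = ∑ B ∈ orbFin, F' B := by
    rw [rcharFn, ← finsum_mem_coe_finset]
    rw [Set.Finite.coe_toFinset]
  have hfinsum : (∑ᶠ x ∈ (patternU J : Set (Matrix (Fin n) (Fin n) F)),
      (if x * g * x⁻¹ ∈ patternU R then θ (dpair A ((x * g * x⁻¹)⁻¹ - 1)) else 0))
      = ∑ x ∈ sJ, G x := by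
    rw [← finsum_mem_coe_finset, Set.Finite.coe_toFinset]
  rw [hrchar, hfinsum]
  -- the pointwise identity
  have hpoint : ∀ x ∈ sJ, G x = F' (φ x) := by
    intro x hxmem
    have hx : x ∈ patternU J := by rw [hsJ, Set.Finite.mem_toFinset] at hxmem; exact hxmem
    have hxi := patternU_inv hltJ hclJ hx
    have hgx : g * x⁻¹ ∈ patternU J := patternU_mul hltJ hclJ hg hxi.1
    have hxg : x * g ∈ patternU J := patternU_mul hltJ hclJ hx hg
    have hc : x * g * x⁻¹ ∈ patternU J := patternU_mul hltJ hclJ hxg hxi.1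
    show (if x * g * x⁻¹ ∈ patternU R then θ (dpair A ((x * g * x⁻¹)⁻¹ - 1)) else 0)
      = (if actR J (actR J A x) g = actR J A x
          then θ (dpair (actR J A x) (g⁻¹ - 1)) else 0)
    set B : Matrix (Fin n) (Fin n) F := actR J A x with hB
    have hBV : B ∈ patternV J := projJ_mem J _
    have hBgV : actR J B g ∈ patternV J := projJ_mem J _
    have hactc : actR J A (x * g * x⁻¹) = actR J (actR J B g) x⁻¹ := by
      rw [← actR_mul hJ A hxg hxi.1, ← actR_mul hJ A hx hg]
    have hiff : (x * g * x⁻¹ ∈ patternU R) ↔ actR J B g = B := by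
      rw [← stab_iff hJ hA htemp hR hc]
      constructor
      · intro h
        have h2 : actR J (actR J A (x * g * x⁻¹)) x = actR J A x := by rw [h]
        rw [hactc, actR_mul hJ _ hxi.1 hx, hxi.2.2, actR_one hBgV] at h2
        exact h2
      · intro h
        rw [hactc, h, hB, actR_mul hJ A hx hxi.1, hxi.2.1, actR_one hA]
    by_cases hcase : actR J B g = B
    · rw [if_pos (hiff.mpr hcase), if_pos hcase]
      congr 1
      have e1 := cocycle hltJ hclJ hx hgx A
      have e2 := cocycle hltJ hclJ hg hxi.1 B
      have e3 := cocycle hltJ hclJ hx hxi.1 A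
      rw [hxi.2.1, inv_one, sub_self, dpair_zero_right] at e3
      rw [← hB] at e1
      rw [← hB] at e3
      rw [hcase] at e2
      have hassoc : x * g * x⁻¹ = x * (g * x⁻¹) := by rw [mul_assoc]
      rw [hassoc, e1, e2]
      linear_combination -e3
    · rw [if_neg (fun h => hcase (hiff.mp h)), if_neg hcase]
  rw [Finset.sum_congr rfl hpoint]
  have himg : sJ.image φ = orbFin := by
    ext B
    rw [Finset.mem_image, horbFin, Set.Finite.mem_toFinset]
    constructor
    · rintro ⟨x, hxmem, hxB⟩
      rw [hsJ, Set.Finite.mem_toFinset] at hxmem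
      exact ⟨x, hxmem, hxB.symm⟩
    · rintro ⟨u, hu, huB⟩
      exact ⟨u, by rw [hsJ, Set.Finite.mem_toFinset]; exact hu, huB.symm⟩
  rw [Finset.sum_comp F' φ, himg]
  have hcard : ∀ B ∈ orbFin, (sJ.filter (fun x => φ x = B)).card = sR.card := by
    intro B hBmem
    rw [horbFin, Set.Finite.mem_toFinset] at hBmem
    obtain ⟨x0, hx0, hx0B⟩ := hBmem
    have hx0i := patternU_inv hltJ hclJ hx0
    have hBact : B = actR J A x0 := hx0B
    refine Finset.card_bij (fun x _ => x * x0⁻¹) ?_ ?_ ?_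
    · intro x hxf
      rw [Finset.mem_filter, hsJ, Set.Finite.mem_toFinset] at hxf
      obtain ⟨hxJ, hφx⟩ := hxf
      have hφx' : actR J A x = B := hφx
      have hmem : x * x0⁻¹ ∈ patternU J := patternU_mul hltJ hclJ hxJ hx0i.1
      rw [hsR, Set.Finite.mem_toFinset]
      refine (stab_iff hJ hA htemp hR hmem).mp ?_
      rw [← actR_mul hJ A hxJ hx0i.1, hφx', hBact, actR_mul hJ A hx0 hx0i.1,
        hx0i.2.1, actR_one hA]
    · intro x1 h1 x2 h2 heq
      have heq' : x1 * x0⁻¹ = x2 * x0⁻¹ := heq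
      have h3 : x1 * x0⁻¹ * x0 = x2 * x0⁻¹ * x0 := by rw [heq']
      rwa [mul_assoc, mul_assoc, hx0i.2.2, mul_one, mul_one] at h3
    · intro r hr
      rw [hsR, Set.Finite.mem_toFinset] at hr
      have hrJ : r ∈ patternU J := patternU_mono
        (by rw [hR]; rintro x ⟨hx, -⟩; exact hx) hr
      refine ⟨r * x0, ?_, ?_⟩
      · rw [Finset.mem_filter, hsJ, Set.Finite.mem_toFinset]
        refine ⟨patternU_mul hltJ hclJ hrJ hx0, ?_⟩
        show actR J A (r * x0) = B
        rw [← actR_mul hJ A hrJ hx0,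
          (stab_iff hJ hA htemp hR hrJ).mpr hr, hBact]
      · show r * x0 * x0⁻¹ = r
        rw [mul_assoc, hx0i.2.1, mul_one]
  have hcardR : (Nat.card ↥(patternU R : Set (Matrix (Fin n) (Fin n) F)) : ℂ) = (sR.card : ℂ) := by
    rw [Nat.card_coe_set_eq, Set.ncard_eq_toFinset_card _ (patternU R : Set (Matrix (Fin n) (Fin n) F)).toFinite]
  rw [hcardR, Finset.mul_sum]
  apply Finset.sum_congr rfl
  intro B hB
  rw [hcard B hB, nsmul_eq_mul]

/-- Let J ⊆ Φ⁺ be column closed (J = {(i,j) ∈ Φ⁺ : j ∈ I}) and [A] ∈ V̂_J a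
template with main condition set p = main[A].  Let R ⊆ J consist of (1) the main conditions
and all positions of J above them, (2) all positions of J in zero columns of A, and (3) all
positions of J in J-normal rows.  Then R is closed, Pstab_{U_J}[A] = U_R, and
ℂO_A^r ≅ Ind_{U_R}^{U_J} ℂ[A]; since both sides are modules over the semisimple algebra
ℂU_J, the isomorphism is expressed by equality of the characters they afford, using the
induced character formula Ind_{U_R}^{U_J}τ(g) = |U_R|⁻¹ Σ_{x∈U_J, xgx⁻¹∈U_R} τ(xgx⁻¹) with
τ(u) = θ(A*(u⁻¹−E)) the linear character of U_R acting on ℂ[A]. -/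
theorem stmt_16 {F : Type} [Field F] [Fintype F] {n : ℕ}
    (I : Set (Fin n)) (J : Set (Fin n × Fin n))
    (hJ : J = {x : Fin n × Fin n | x.1 < x.2 ∧ x.2 ∈ I})
    (θ : AddChar F ℂ) (hθ : θ ≠ 1)
    (A : Matrix (Fin n) (Fin n) F) (hA : A ∈ patternV J) (htemp : isTemplate J A)
    (R : Set (Fin n × Fin n))
    (hR : R = {x : Fin n × Fin n | x ∈ J ∧
        ((∃ k : Fin n, (k, x.2) ∈ mainSet A ∧ x.1 ≤ k) ∨
         (∀ k : Fin n, A k x.2 = 0) ∨ x.1 ∉ I)}) :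
    (∀ i j k : Fin n, (i, j) ∈ R → (j, k) ∈ R → (i, k) ∈ R) ∧
    pstab J θ A = (patternU R : Set (Matrix (Fin n) (Fin n) F)) ∧
    (∀ g ∈ patternU J,
        (Nat.card ↥(patternU R : Set (Matrix (Fin n) (Fin n) F)) : ℂ) * rcharFn J θ A g =
          ∑ᶠ x ∈ (patternU J : Set (Matrix (Fin n) (Fin n) F)),
            (if x * g * x⁻¹ ∈ patternU R then θ (dpair A ((x * g * x⁻¹)⁻¹ - 1)) else 0)) := by
  exact stmt_16aux I J hJ θ hθ A hA htemp R hR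
end
end

section
/- Let q be a prime power, J ⊆ Φ⁺ column closed, and [A] ∈ V̂_J a template with main conditions p = main[A] and set of J-places Pl(p,J). Then for every choice of coefficients α_{ij} ∈ 𝔽_q for (i,j) ∈ Pl(p,J) there exists a unique [B] in the right orbit O_A^r with B_{ij} = α_{ij} for all (i,j) ∈ Pl(p,J); in particular |O_A^r| = q^{|Pl(p,J)|}, and for [B] ∈ O_A^r the entries B_{kl} at positions (k,l) ∈ J \ Pl(p,J) are determined by (indeed depend linearly on) the entries B_{ij} with (i,j) ∈ Pl(p,J). -/
open Matrix
open scoped Classical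

noncomputable section

variable {F : Type} [Field F] [Fintype F] {n : ℕ}

open Matrix
open scoped Classical
noncomputable section

namespace S17

variable {F : Type} [Field F] {n : ℕ}

/-- linear coefficient action -/
def Tm (J : Set (Fin n × Fin n)) (A : Matrix (Fin n) (Fin n) F) (c : Fin n × Fin n → F) :
    Matrix (Fin n) (Fin n) F :=
  Matrix.of fun i k =>
    if (i, k) ∈ J then ∑ j, (if (k, j) ∈ J then c (k, j) * A i j else 0) else 0

lemma pow_entry {N : Matrix (Fin n) (Fin n) F}
    (hN : ∀ i j : Fin n, ¬ ((i : ℕ) < j) → N i j = 0) :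
    ∀ (m : ℕ) (i j : Fin n), (N ^ m) i j ≠ 0 → (i : ℕ) + m ≤ (j : ℕ) := by
  intro m
  induction m with
  | zero =>
    intro i j h
    rw [pow_zero] at h
    by_cases hij : i = j
    · subst hij; omega
    · exact absurd (Matrix.one_apply_ne hij) h
  | succ m ih =>
    intro i j h
    rw [pow_succ'] at h
    rw [Matrix.mul_apply] at h
    obtain ⟨t, _, ht⟩ := Finset.exists_ne_zero_of_sum_ne_zero h
    have h1 : N i t ≠ 0 := fun h0 => ht (by rw [h0, zero_mul])
    have h2 : (N ^ m) t j ≠ 0 := fun h0 => ht (by rw [h0, mul_zero])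
    have := ih t j h2
    have : (i : ℕ) < t := by by_contra hc; exact h1 (hN _ _ hc)
    omega

lemma pow_supp {J : Set (Fin n × Fin n)}
    (hlt : ∀ x ∈ J, (x.1 : Fin n) < x.2)
    (hcc : ∀ a b c : Fin n, (a, b) ∈ J → c < b → (c, b) ∈ J)
    {N : Matrix (Fin n) (Fin n) F}
    (hN : ∀ i j : Fin n, (i, j) ∉ J → N i j = 0) :
    ∀ (m : ℕ) (i j : Fin n), (N ^ (m + 1)) i j ≠ 0 → (i, j) ∈ J := by
  intro m
  induction m with
  | zero =>
    intro i j h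
    rw [pow_one] at h
    by_contra hc; exact h (hN _ _ hc)
  | succ m ih =>
    intro i j h
    rw [pow_succ'] at h
    rw [Matrix.mul_apply] at h
    obtain ⟨t, _, ht⟩ := Finset.exists_ne_zero_of_sum_ne_zero h
    have h1 : N i t ≠ 0 := fun h0 => ht (by rw [h0, zero_mul])
    have h2 : (N ^ (m + 1)) t j ≠ 0 := fun h0 => ht (by rw [h0, mul_zero])
    have htj : (t, j) ∈ J := ih t j h2
    have hit : (i, t) ∈ J := by by_contra hc; exact h1 (hN _ _ hc)
    exact hcc t j i htj (lt_trans (hlt _ hit) (hlt _ htj))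

/-- every element of the pattern group has a two-sided inverse in the pattern group -/
lemma exists_inv {J : Set (Fin n × Fin n)}
    (hlt : ∀ x ∈ J, (x.1 : Fin n) < x.2)
    (hcc : ∀ a b c : Fin n, (a, b) ∈ J → c < b → (c, b) ∈ J)
    {v : Matrix (Fin n) (Fin n) F} (hv : v ∈ patternU J) :
    ∃ w ∈ patternU J, v * w = 1 ∧ w * v = 1 := by
  obtain ⟨hv1, hv2⟩ := hv
  set N : Matrix (Fin n) (Fin n) F := v - 1 with hNdef
  have hNsupp : ∀ i j : Fin n, (i, j) ∉ J → N i j = 0 := by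
    intro i j hij
    by_cases hd : i = j
    · subst hd
      simp [hNdef, Matrix.sub_apply, hv1 i]
    · simp [hNdef, Matrix.sub_apply, Matrix.one_apply_ne hd, hv2 i j hd hij]
  have hNlt : ∀ i j : Fin n, ¬ ((i : ℕ) < j) → N i j = 0 := by
    intro i j hij
    refine hNsupp i j fun hmem => hij ?_
    exact hlt _ hmem
  have hMlt : ∀ i j : Fin n, ¬ ((i : ℕ) < j) → (-N) i j = 0 := by
    intro i j hij; simp [hNlt i j hij]
  have hMsupp : ∀ i j : Fin n, (i, j) ∉ J → (-N) i j = 0 := by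
    intro i j hij; simp [hNsupp i j hij]
  set w : Matrix (Fin n) (Fin n) F := ∑ m ∈ Finset.range (n + 1), (-N) ^ m with hwdef
  have hpow : ((-N) : Matrix (Fin n) (Fin n) F) ^ (n + 1) = 0 := by
    ext i j
    by_contra hne
    have := pow_entry hMlt (n + 1) i j hne
    have := j.isLt
    simp only [Matrix.zero_apply] at hne
    omega
  have hwv : w * v = 1 := by
    have hgeom := geom_sum_mul (-N) (n + 1)
    have hv' : -N - 1 = -v := by rw [hNdef]; abel
    rw [hv', hpow, mul_neg, zero_sub, neg_inj] at hgeom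
    rw [hwdef]
    exact hgeom
  have hvw : v * w = 1 := mul_eq_one_comm.mp hwv
  refine ⟨w, ⟨?_, ?_⟩, hvw, hwv⟩
  · intro i
    rw [hwdef, Matrix.sum_apply]
    rw [Finset.sum_eq_single_of_mem 0 (Finset.mem_range.mpr (by omega))]
    · simp
    · intro m _ hm
      by_contra hne
      have := pow_entry hMlt m i i hne
      omega
  · intro i j hij hmem
    rw [hwdef, Matrix.sum_apply]
    refine Finset.sum_eq_zero fun m _ => ?_
    cases m with
    | zero => simp [Matrix.one_apply_ne hij]
    | succ m =>
      by_contra hne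
      exact hmem (pow_supp hlt hcc hMsupp m i j hne)

end S17
namespace S17
variable {F : Type} [Field F] {n : ℕ}

lemma proj_mul_eq {J : Set (Fin n × Fin n)}
    (hlt : ∀ x ∈ J, (x.1 : Fin n) < x.2)
    {A : Matrix (Fin n) (Fin n) F} (hA : A ∈ patternV J)
    {v : Matrix (Fin n) (Fin n) F} (hv : v ∈ patternU J) :
    projJ J (A * vᵀ) = A + Tm J A (fun x => v x.1 x.2) := by
  ext i k
  simp only [projJ, Tm, Matrix.of_apply, Matrix.add_apply]
  by_cases hik : (i, k) ∈ J
  · rw [if_pos hik, if_pos hik, Matrix.mul_apply]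
    simp only [Matrix.transpose_apply]
    rw [Fintype.sum_eq_add_sum_compl k (fun j => A i j * v k j),
        Fintype.sum_eq_add_sum_compl k (fun j => if (k, j) ∈ J then v k j * A i j else 0)]
    have hkk : ((if (k, k) ∈ J then v k k * A i k else 0) : F) = 0 :=
      if_neg (fun h => absurd (hlt _ h) (lt_irrefl _))
    rw [hkk, zero_add, hv.1 k, mul_one]
    congr 1
    refine Finset.sum_congr rfl fun j hj => ?_
    have hjk : j ≠ k := by simpa using hj
    by_cases hkj : (k, j) ∈ J
    · rw [if_pos hkj, mul_comm]
    · rw [if_neg hkj, hv.2 k j (Ne.symm hjk) hkj, mul_zero]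
  · rw [if_neg hik, if_neg hik, hA i k hik, add_zero]

lemma orb_eq {J : Set (Fin n × Fin n)}
    (hlt : ∀ x ∈ J, (x.1 : Fin n) < x.2)
    (hcc : ∀ a b c : Fin n, (a, b) ∈ J → c < b → (c, b) ∈ J)
    {A : Matrix (Fin n) (Fin n) F} (hA : A ∈ patternV J) :
    orbR J A = {B | ∃ c : Fin n × Fin n → F, B = A + Tm J A c} := by
  ext B
  constructor
  · rintro ⟨u, hu, rfl⟩
    obtain ⟨w, hw, huw, hwu⟩ := exists_inv hlt hcc hu
    have hinv : u⁻¹ = w := Matrix.inv_eq_right_inv huw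
    exact ⟨fun x => w x.1 x.2, by rw [hinv, proj_mul_eq hlt hA hw]⟩
  · rintro ⟨c, rfl⟩
    set E : Matrix (Fin n) (Fin n) F :=
      Matrix.of (fun k j => if (k, j) ∈ J then c (k, j) else 0) with hEdef
    have hvmem : (1 + E : Matrix (Fin n) (Fin n) F) ∈ patternU J := by
      constructor
      · intro i
        have : (i, i) ∉ J := fun h => absurd (hlt _ h) (lt_irrefl _)
        simp [hEdef, this]
      · intro i j hij hmem
        simp [hEdef, Matrix.one_apply_ne hij, hmem]
    obtain ⟨w, hw, hvw, hwv⟩ := exists_inv hlt hcc hvmem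
    refine ⟨w, hw, ?_⟩
    have hinv : w⁻¹ = 1 + E := Matrix.inv_eq_right_inv hwv
    rw [hinv, proj_mul_eq hlt hA hvmem]
    congr 1
    ext i k
    simp only [Tm, Matrix.of_apply]
    by_cases hik : (i, k) ∈ J
    · rw [if_pos hik, if_pos hik]
      refine Finset.sum_congr rfl fun j _ => ?_
      by_cases hkj : (k, j) ∈ J
      · rw [if_pos hkj, if_pos hkj]
        have hkne : k ≠ j := ne_of_lt (hlt _ hkj)
        simp [hEdef, Matrix.one_apply_ne hkne, hkj]
      · rw [if_neg hkj, if_neg hkj]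
    · rw [if_neg hik, if_neg hik]
end S17
namespace S17
variable {F : Type} [Field F] {n : ℕ}

/-- pivot positions -/
def Piv (J : Set (Fin n × Fin n)) (A : Matrix (Fin n) (Fin n) F) : Set (Fin n × Fin n) :=
  {x | x ∈ J ∧ ∃ i : Fin n, (i, x.2) ∈ mainSet A ∧ (i, x.1) ∈ J}

/-- the square system -/
def Sm (J : Set (Fin n × Fin n)) (A : Matrix (Fin n) (Fin n) F)
    (c : ↥(Piv J A) → F) : ↥(plSet J (mainSet A)) → F :=
  fun y => ∑ j, if h : (y.val.2, j) ∈ Piv J A then c ⟨_, h⟩ * A y.val.1 j else 0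

lemma main_row_unique {J : Set (Fin n × Fin n)}
    {A : Matrix (Fin n) (Fin n) F} (hA : A ∈ patternV J) (htemp : isTemplate J A)
    {i j j' : Fin n} (h : (i, j) ∈ mainSet A) (h' : (i, j') ∈ mainSet A) : j = j' := by
  by_contra hne
  rcases lt_or_gt_of_ne hne with hlt | hgt
  · have hij : (i, j) ∈ J := by
      by_contra hc; exact h.1 (hA i j hc)
    exact h.1 (htemp i j' j h'.1 h'.2 hij hlt)
  · have hij : (i, j') ∈ J := by
      by_contra hc; exact h'.1 (hA i j' hc)
    exact h'.1 (htemp i j j' h.1 h.2 hij hgt)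

lemma main_col_unique {A : Matrix (Fin n) (Fin n) F}
    {i i' j : Fin n} (h : (i, j) ∈ mainSet A) (h' : (i', j) ∈ mainSet A) : i = i' := by
  rcases lt_trichotomy i i' with hlt | heq | hgt
  · exact absurd (h'.2 i hlt) h.1
  · exact heq
  · exact absurd (h.2 i' hgt) h'.1

/-- columns without a pivot vanish in the relevant rows -/
lemma nonpiv_col_zero {J : Set (Fin n × Fin n)}
    (hcc : ∀ a b c : Fin n, (a, b) ∈ J → c < b → (c, b) ∈ J)
    {A : Matrix (Fin n) (Fin n) F}
    {j k : Fin n} (hkj : (k, j) ∈ J) (hnp : (k, j) ∉ Piv J A)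
    {i : Fin n} (hik : (i, k) ∈ J)
    (hlt : ∀ x ∈ J, (x.1 : Fin n) < x.2) : A i j = 0 := by
  by_contra hne
  set s : Finset (Fin n) := Finset.univ.filter (fun i' => A i' j ≠ 0) with hsdef
  have hi : i ∈ s := by simp [hsdef, hne]
  have hsne : s.Nonempty := ⟨i, hi⟩
  set i0 := s.min' hsne with hi0def
  have hi0 : A i0 j ≠ 0 := by
    have := s.min'_mem hsne
    simpa [hsdef] using this
  have hmin : ∀ i', i' < i0 → A i' j = 0 := by
    intro i' hi'
    by_contra hc
    have : i' ∈ s := by simp [hsdef, hc]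
    exact absurd (s.min'_le i' this) (not_le.mpr hi')
  have hle : i0 ≤ i := s.min'_le i hi
  have hi0k : (i0, k) ∈ J := hcc i k i0 hik (lt_of_le_of_lt hle (hlt _ hik))
  exact hnp ⟨hkj, i0, ⟨hi0, hmin⟩, hi0k⟩

lemma A_zero_on_pl {J : Set (Fin n × Fin n)}
    {A : Matrix (Fin n) (Fin n) F} (htemp : isTemplate J A)
    {y : Fin n × Fin n} (hy : y ∈ plSet J (mainSet A)) : A y.1 y.2 = 0 := by
  obtain ⟨hyJ, j, hm, hj⟩ := hy
  exact htemp y.1 j y.2 hm.1 hm.2 hyJ hj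

lemma Sm_inj {J : Set (Fin n × Fin n)}
    (hlt : ∀ x ∈ J, (x.1 : Fin n) < x.2)
    (hcc : ∀ a b c : Fin n, (a, b) ∈ J → c < b → (c, b) ∈ J)
    {A : Matrix (Fin n) (Fin n) F} (hA : A ∈ patternV J) (htemp : isTemplate J A) :
    Function.Injective (Sm J A) := by
  intro c c' h
  have key : ∀ (t : ℕ) (j k : Fin n) (hp : (k, j) ∈ Piv J A), n ≤ (j : ℕ) + t →
      c ⟨(k, j), hp⟩ = c' ⟨(k, j), hp⟩ := by
    intro t
    induction t with
    | zero => intro j k hp hle; have := j.isLt; omega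
    | succ t ih =>
      intro j k hp hle
      obtain ⟨hkj, i, hm, hik⟩ := hp
      have hplm : (i, k) ∈ plSet J (mainSet A) := ⟨hik, j, hm, hlt _ hkj⟩
      set y : ↥(plSet J (mainSet A)) := ⟨(i, k), hplm⟩ with hydef
      have hy := congrFun h y
      simp only [Sm, hydef] at hy
      set f : Fin n → F :=
        fun j' => if h' : (k, j') ∈ Piv J A then c ⟨(k, j'), h'⟩ * A i j' else 0 with hfdef
      set g : Fin n → F :=
        fun j' => if h' : (k, j') ∈ Piv J A then c' ⟨(k, j'), h'⟩ * A i j' else 0 with hgdef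
      have hsum : ∑ j', f j' = ∑ j', g j' := hy
      have tail : ∀ j' ∈ Finset.univ.erase j, f j' = g j' := by
        intro j' hj'
        have hne : j' ≠ j := Finset.ne_of_mem_erase hj'
        by_cases hp' : (k, j') ∈ Piv J A
        · rcases lt_or_gt_of_ne hne with hlt' | hgt
          · have hij' : (i, j') ∈ J :=
              hcc k j' i hp'.1 (lt_trans (hlt _ hik) (hlt _ hp'.1))
            have hz : A i j' = 0 := htemp i j j' hm.1 hm.2 hij' hlt'
            simp [hfdef, hgdef, hp', hz]
          · have hih := ih j' k hp' (by
              have : (j : ℕ) < (j' : ℕ) := hgt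
              omega)
            simp only [hfdef, hgdef]
            rw [dif_pos hp', dif_pos hp', hih]
        · simp [hfdef, hgdef, hp']
      have htl : ∑ j' ∈ Finset.univ.erase j, f j' = ∑ j' ∈ Finset.univ.erase j, g j' :=
        Finset.sum_congr rfl tail
      have hhead : f j = g j := by
        have h1 := Finset.add_sum_erase Finset.univ f (Finset.mem_univ j)
        have h2 := Finset.add_sum_erase Finset.univ g (Finset.mem_univ j)
        have : f j + ∑ j' ∈ Finset.univ.erase j, f j' =
            g j + ∑ j' ∈ Finset.univ.erase j, f j' := by
          rw [h1, htl, h2, hsum]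
        exact add_right_cancel this
      have hpv : (k, j) ∈ Piv J A := ⟨hkj, i, hm, hik⟩
      simp only [hfdef, hgdef, dif_pos hpv] at hhead
      exact mul_right_cancel₀ hm.1 hhead
  funext x
  obtain ⟨⟨k, j⟩, hp⟩ := x
  exact key n j k hp (by omega)

end S17
namespace S17
variable {F : Type} [Field F] {n : ℕ}

lemma piv_bij {J : Set (Fin n × Fin n)}
    (hlt : ∀ x ∈ J, (x.1 : Fin n) < x.2)
    (hcc : ∀ a b c : Fin n, (a, b) ∈ J → c < b → (c, b) ∈ J)
    {A : Matrix (Fin n) (Fin n) F} (hA : A ∈ patternV J) (htemp : isTemplate J A) :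
    ∃ e : ↥(Piv J A) → ↥(plSet J (mainSet A)), Function.Bijective e := by
  have hchoice : ∀ x : ↥(Piv J A), ∃ i : Fin n, (i, x.val.2) ∈ mainSet A ∧ (i, x.val.1) ∈ J :=
    fun x => x.prop.2
  choose r hr1 hr2 using hchoice
  refine ⟨fun x => ⟨(r x, x.val.1), ⟨hr2 x, x.val.2, hr1 x, hlt _ x.prop.1⟩⟩, ?_, ?_⟩
  · intro x x' hxx
    have h1 : r x = r x' := by
      have := congrArg (fun z => (z : ↥(plSet J (mainSet A))).val.1) hxx
      simpa using this
    have h2 : x.val.1 = x'.val.1 := by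
      have := congrArg (fun z => (z : ↥(plSet J (mainSet A))).val.2) hxx
      simpa using this
    have h3 : x.val.2 = x'.val.2 := by
      have := hr1 x
      rw [h1] at this
      exact main_row_unique hA htemp this (hr1 x')
    exact Subtype.ext (Prod.ext h2 h3)
  · rintro ⟨⟨i, k⟩, hik, j, hm, hkj⟩
    have hij : (i, j) ∈ J := by by_contra hc; exact hm.1 (hA i j hc)
    have hkjJ : (k, j) ∈ J := hcc i j k hij hkj
    set x : ↥(Piv J A) := ⟨(k, j), hkjJ, i, hm, hik⟩ with hxdef
    refine ⟨x, ?_⟩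
    have : r x = i := main_col_unique (hr1 x) hm
    exact Subtype.ext (Prod.ext this rfl)

lemma Sm_surj {J : Set (Fin n × Fin n)}
    (hlt : ∀ x ∈ J, (x.1 : Fin n) < x.2)
    (hcc : ∀ a b c : Fin n, (a, b) ∈ J → c < b → (c, b) ∈ J)
    {A : Matrix (Fin n) (Fin n) F} [Fintype F]
    (hA : A ∈ patternV J) (htemp : isTemplate J A) :
    Function.Surjective (Sm J A) := by
  obtain ⟨e, hebij⟩ := piv_bij hlt hcc hA htemp
  have hG : Function.Injective
      (fun d : ↥(plSet J (mainSet A)) → F => Sm J A (fun x => d (e x))) := by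
    intro d d' hdd
    have h1 : (fun x => d (e x)) = (fun x => d' (e x)) := Sm_inj hlt hcc hA htemp hdd
    funext y
    obtain ⟨x, rfl⟩ := hebij.2 y
    exact congrFun h1 x
  have hGbij := (Finite.injective_iff_bijective).mp hG
  intro β
  obtain ⟨d, hd⟩ := hGbij.2 β
  exact ⟨fun x => d (e x), hd⟩

lemma Tm_eq_Sm {J : Set (Fin n × Fin n)}
    (hlt : ∀ x ∈ J, (x.1 : Fin n) < x.2)
    (hcc : ∀ a b c : Fin n, (a, b) ∈ J → c < b → (c, b) ∈ J)
    {A : Matrix (Fin n) (Fin n) F} (hA : A ∈ patternV J) (htemp : isTemplate J A)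
    (c : Fin n × Fin n → F) (y : ↥(plSet J (mainSet A))) :
    Tm J A c y.val.1 y.val.2 = Sm J A (fun x => c x.val) y := by
  obtain ⟨⟨i, k⟩, hik, hrest⟩ := y
  simp only [Tm, Sm, Matrix.of_apply]
  rw [if_pos hik]
  refine Finset.sum_congr rfl fun j _ => ?_
  by_cases hp : (k, j) ∈ Piv J A
  · rw [dif_pos hp, if_pos hp.1]
  · rw [dif_neg hp]
    by_cases hkj : (k, j) ∈ J
    · rw [if_pos hkj, nonpiv_col_zero hcc hkj hp hik hlt, mul_zero]
    · rw [if_neg hkj]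

lemma TmU {J : Set (Fin n × Fin n)}
    (hlt : ∀ x ∈ J, (x.1 : Fin n) < x.2)
    (hcc : ∀ a b c : Fin n, (a, b) ∈ J → c < b → (c, b) ∈ J)
    {A : Matrix (Fin n) (Fin n) F} (hA : A ∈ patternV J) (htemp : isTemplate J A)
    (c c' : Fin n × Fin n → F)
    (h : ∀ y ∈ plSet J (mainSet A), Tm J A c y.1 y.2 = Tm J A c' y.1 y.2) :
    Tm J A c = Tm J A c' := by
  have hS : Sm J A (fun x => c x.val) = Sm J A (fun x => c' x.val) := by
    funext y
    rw [← Tm_eq_Sm hlt hcc hA htemp, ← Tm_eq_Sm hlt hcc hA htemp]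
    exact h y.val y.prop
  have hcc' : (fun x : ↥(Piv J A) => c x.val) = (fun x => c' x.val) :=
    Sm_inj hlt hcc hA htemp hS
  ext i k
  simp only [Tm, Matrix.of_apply]
  by_cases hik : (i, k) ∈ J
  · rw [if_pos hik, if_pos hik]
    refine Finset.sum_congr rfl fun j _ => ?_
    by_cases hkj : (k, j) ∈ J
    · rw [if_pos hkj, if_pos hkj]
      by_cases hp : (k, j) ∈ Piv J A
      · have := congrFun hcc' ⟨(k, j), hp⟩
        simp only at this
        rw [this]
      · rw [nonpiv_col_zero hcc hkj hp hik hlt, mul_zero, mul_zero]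
    · rw [if_neg hkj, if_neg hkj]
  · rw [if_neg hik, if_neg hik]

lemma TmE {J : Set (Fin n × Fin n)}
    (hlt : ∀ x ∈ J, (x.1 : Fin n) < x.2)
    (hcc : ∀ a b c : Fin n, (a, b) ∈ J → c < b → (c, b) ∈ J)
    {A : Matrix (Fin n) (Fin n) F} [Fintype F] (hA : A ∈ patternV J)
    (htemp : isTemplate J A) (α : Fin n × Fin n → F) :
    ∃ c : Fin n × Fin n → F, ∀ y ∈ plSet J (mainSet A), Tm J A c y.1 y.2 = α y := by
  obtain ⟨d, hd⟩ := Sm_surj hlt hcc hA htemp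
    (fun y : ↥(plSet J (mainSet A)) => α y.val)
  refine ⟨fun x => if h : x ∈ Piv J A then d ⟨x, h⟩ else 0, fun y hy => ?_⟩
  have h1 := Tm_eq_Sm hlt hcc hA htemp
    (fun x => if h : x ∈ Piv J A then d ⟨x, h⟩ else 0) ⟨y, hy⟩
  rw [h1]
  have h2 : (fun x : ↥(Piv J A) =>
      if h : x.val ∈ Piv J A then d ⟨x.val, h⟩ else 0) = d := by
    funext x
    rw [dif_pos x.prop]
  rw [h2, hd]

lemma Tm_lincomb {J : Set (Fin n × Fin n)}
    {A : Matrix (Fin n) (Fin n) F} {γ : Type*} (s : Finset γ)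
    (t : γ → F) (g : γ → Fin n × Fin n → F) (i k : Fin n) :
    Tm J A (fun z => ∑ y ∈ s, t y * g y z) i k = ∑ y ∈ s, t y * Tm J A (g y) i k := by
  simp only [Tm, Matrix.of_apply]
  by_cases hik : (i, k) ∈ J
  · rw [if_pos hik]
    simp only [if_pos hik]
    have hstep : ∀ x ∈ s, t x * ∑ j, (if (k, j) ∈ J then g x (k, j) * A i j else 0)
        = ∑ j, (if (k, j) ∈ J then t x * g x (k, j) * A i j else 0) := by
      intro x _
      rw [Finset.mul_sum]
      refine Finset.sum_congr rfl fun j _ => ?_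
      by_cases hkj : (k, j) ∈ J
      · simp only [if_pos hkj]; ring
      · simp only [if_neg hkj, mul_zero]
    rw [Finset.sum_congr rfl hstep, Finset.sum_comm]
    refine Finset.sum_congr rfl fun j _ => ?_
    by_cases hkj : (k, j) ∈ J
    · simp only [if_pos hkj]
      rw [Finset.sum_mul]
    · simp only [if_neg hkj, Finset.sum_const_zero]
  · rw [if_neg hik]
    simp only [if_neg hik, mul_zero, Finset.sum_const_zero]

end S17

open S17

/-- Let J ⊆ Φ⁺ be column closed and [A] ∈ V̂_J a template with main conditions
p = main[A] and J-places Pl(p,J).  Then for every choice of coefficients α_{ij} ∈ 𝔽_q for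
(i,j) ∈ Pl(p,J) there is a unique [B] ∈ O_A^r with B_{ij} = α_{ij} on Pl(p,J); in particular
|O_A^r| = q^{|Pl(p,J)|}, and for [B] ∈ O_A^r the entries at positions of J \ Pl(p,J) depend
(affine-)linearly on the entries at the J-places. -/
theorem stmt_17 {F : Type} [Field F] [Fintype F] {n : ℕ}
    (I : Set (Fin n)) (J : Set (Fin n × Fin n))
    (hJ : J = {x : Fin n × Fin n | x.1 < x.2 ∧ x.2 ∈ I})
    (A : Matrix (Fin n) (Fin n) F) (hA : A ∈ patternV J) (htemp : isTemplate J A) :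
    (∀ α : Fin n × Fin n → F,
        ∃! B : Matrix (Fin n) (Fin n) F,
          B ∈ orbR J A ∧ ∀ x ∈ plSet J (mainSet A), B x.1 x.2 = α x) ∧
    Nat.card ↥(orbR J A) = Fintype.card F ^ Nat.card ↥(plSet J (mainSet A)) ∧
    (∀ x : Fin n × Fin n, x ∈ J → x ∉ plSet J (mainSet A) →
        ∃ (c : Fin n × Fin n → F) (d : F), ∀ B ∈ orbR J A,
          B x.1 x.2 = d + ∑ᶠ y ∈ plSet J (mainSet A), c y * B y.1 y.2) := by
  classical
  have hlt : ∀ x ∈ J, (x.1 : Fin n) < x.2 := by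
    intro x hx; rw [hJ] at hx; exact hx.1
  have hcc : ∀ a b c : Fin n, (a, b) ∈ J → c < b → (c, b) ∈ J := by
    intro a b c hab hcb; rw [hJ] at hab ⊢; exact ⟨hcb, hab.2⟩
  have horb : orbR J A = {B | ∃ c : Fin n × Fin n → F, B = A + Tm J A c} :=
    orb_eq hlt hcc hA
  have h1 : ∀ α : Fin n × Fin n → F,
      ∃! B : Matrix (Fin n) (Fin n) F,
        B ∈ orbR J A ∧ ∀ x ∈ plSet J (mainSet A), B x.1 x.2 = α x := by
    intro α
    obtain ⟨c, hc⟩ := TmE hlt hcc hA htemp α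
    refine ⟨A + Tm J A c, ⟨?_, ?_⟩, ?_⟩
    · rw [horb]; exact ⟨c, rfl⟩
    · intro y hy
      rw [Matrix.add_apply, A_zero_on_pl htemp hy, zero_add]
      exact hc y hy
    · rintro B ⟨hBmem, hBval⟩
      rw [horb] at hBmem
      obtain ⟨c', rfl⟩ := hBmem
      have heq : Tm J A c' = Tm J A c := by
        apply TmU hlt hcc hA htemp
        intro y hy
        have e1 := hBval y hy
        rw [Matrix.add_apply, A_zero_on_pl htemp hy, zero_add] at e1
        rw [e1]
        exact (hc y hy).symm
      rw [heq]
  refine ⟨h1, ?_, ?_⟩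
  · have hφ : ∃ φ : ↥(orbR J A) → (↥(plSet J (mainSet A)) → F), Function.Bijective φ := by
      refine ⟨fun B y => B.val y.val.1 y.val.2, ?_, ?_⟩
      · intro B B' hBB
        obtain ⟨Bu, _, huniq⟩ := h1 (fun z => B.val z.1 z.2)
        have e1 := huniq B.val ⟨B.prop, fun y hy => rfl⟩
        have e2 := huniq B'.val ⟨B'.prop, fun y hy => (congrFun hBB ⟨y, hy⟩).symm⟩
        exact Subtype.ext (e1.trans e2.symm)
      · intro β
        obtain ⟨Bu, ⟨hmem, hval⟩, _⟩ :=
          h1 (fun z => if h : z ∈ plSet J (mainSet A) then β ⟨z, h⟩ else 0)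
        refine ⟨⟨Bu, hmem⟩, ?_⟩
        funext y
        have hv := hval y.val y.prop
        rw [dif_pos y.prop] at hv
        exact hv
    obtain ⟨φ, hφbij⟩ := hφ
    rw [Nat.card_congr (Equiv.ofBijective φ hφbij), Nat.card_fun, Nat.card_eq_fintype_card]
  · intro x hxJ hxPl
    have hfin : (plSet J (mainSet A)).Finite := Set.toFinite _
    have hδ : ∀ y : Fin n × Fin n, ∃ cy : Fin n × Fin n → F,
        ∀ z ∈ plSet J (mainSet A), Tm J A cy z.1 z.2 = (if z = y then (1 : F) else 0) :=
      fun y => TmE hlt hcc hA htemp (fun z => if z = y then 1 else 0)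
    choose cy hcy using hδ
    refine ⟨fun y => Tm J A (cy y) x.1 x.2, A x.1 x.2, ?_⟩
    intro B hB
    rw [horb] at hB
    obtain ⟨c, rfl⟩ := hB
    have hagree : ∀ w ∈ plSet J (mainSet A),
        Tm J A (fun z => ∑ y ∈ hfin.toFinset, (Tm J A c y.1 y.2) * cy y z) w.1 w.2
        = Tm J A c w.1 w.2 := by
      intro w hw
      rw [Tm_lincomb]
      have hstep : ∀ y ∈ hfin.toFinset,
          (Tm J A c y.1 y.2) * Tm J A (cy y) w.1 w.2
          = (Tm J A c y.1 y.2) * (if w = y then (1 : F) else 0) := by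
        intro y _
        rw [hcy y w hw]
      rw [Finset.sum_congr rfl hstep,
        Finset.sum_eq_single_of_mem w (hfin.mem_toFinset.mpr hw)]
      · rw [if_pos rfl, mul_one]
      · intro y _ hyw
        rw [if_neg (fun h => hyw h.symm), mul_zero]
    have heq := TmU hlt hcc hA htemp _ c hagree
    rw [Matrix.add_apply, ← heq, Tm_lincomb]
    congr 1
    rw [finsum_mem_eq_finite_toFinset_sum _ hfin]
    refine Finset.sum_congr rfl fun y hy => ?_
    have hymem : y ∈ plSet J (mainSet A) := hfin.mem_toFinset.mp hy
    rw [Matrix.add_apply, A_zero_on_pl htemp hymem, zero_add, mul_comm, heq]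
end
end
end
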